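/- arXiv:1202.3064 — 7 statements merged into one kernel-verified Lean document; each statement's English description precedes it below -/
import Mathlib

section
/- Let n ≥ 2 and let V be an invertible n×n real matrix such that the first row of V is a scalar multiple of the all-ones row vector (1,1,...,1) and, for every i ≥ 2, the entries of the i-th row of V sum to 0. Then: (a) for every r ∈ ℝ and every (n−1)×(n−1) real matrix X, the matrix A = V⁻¹ · B · V, where B is the block-diagonal matrix with the scalar r in the (1,1) position and X as the lower-right (n−1)×(n−1) block (and zeros elsewhere in the first row and first column), has every row sum and every column sum equal to r; (b) conversely, for every n×n real matrix A all of whose row sums and column sums equal r, there exists an (n−1)×(n−1) real matrix X such that V · A · V⁻¹ equals the block-diagonal matrix with r in the (1,1) position and X as the lower-right block. -/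
/-!
Write `e₀ = Pi.single 0 1`. Since the first row of `V` is `c • 1` with `c ≠ 0` and the other rows
sum to `0`, we have `V *ᵥ 1 = ((m + 1) c) • e₀` and `e₀ ᵥ* V = c • 1`. So `1` is a right and a
left eigenvector of `A` for `r` (all row and column sums equal `r`) exactly when `e₀` is a right
and a left eigenvector of `V * A * V⁻¹` for `r`, i.e. when its first column and first row are
`r • e₀`, which is the block shape.
-/

open Matrix

/-- The `(m+1) × (m+1)` block matrix with the scalar `r` in the `(1,1)` position,
`X` as the lower-right `m × m` block, and zeros elsewhere in the first row and column. -/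
noncomputable def blockOneMat {m : ℕ} (r : ℝ) (X : Matrix (Fin m) (Fin m) ℝ) :
    Matrix (Fin (m + 1)) (Fin (m + 1)) ℝ :=
  Matrix.of fun i j =>
    if hi : i = 0 then (if j = 0 then r else 0)
    else if hj : j = 0 then 0 else X (i.pred hi) (j.pred hj)

namespace Matrix

variable {n R : Type*} [Fintype n] [CommRing R]

theorem mulVec_one_eq_smul_one_iff (A : Matrix n n R) (r : R) :
    A *ᵥ 1 = r • 1 ↔ ∀ i, ∑ j, A i j = r := by
  simp [funext_iff, mulVec, dotProduct]

theorem one_vecMul_eq_smul_one_iff (A : Matrix n n R) (r : R) :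
    1 ᵥ* A = r • 1 ↔ ∀ j, ∑ i, A i j = r := by
  simp [funext_iff, vecMul, dotProduct]

theorem mulVec_smul_eq_smul_smul_iff [IsDomain R] (A : Matrix n n R) {a : R} (ha : a ≠ 0)
    (v : n → R) (r : R) : A *ᵥ (a • v) = r • a • v ↔ A *ᵥ v = r • v := by
  rw [mulVec_smul, smul_comm r a, smul_right_inj ha]

theorem smul_vecMul_eq_smul_smul_iff [IsDomain R] (A : Matrix n n R) {a : R} (ha : a ≠ 0)
    (v : n → R) (r : R) : (a • v) ᵥ* A = r • a • v ↔ v ᵥ* A = r • v := by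
  rw [smul_vecMul, smul_comm r a, smul_right_inj ha]

variable [DecidableEq n]

theorem conj_mulVec_eq_smul_iff {P : Matrix n n R} (hP : IsUnit P.det) (A : Matrix n n R)
    {u w : n → R} (huw : P *ᵥ u = w) (r : R) :
    (P * A * P⁻¹) *ᵥ w = r • w ↔ A *ᵥ u = r • u := by
  have hinv : P⁻¹ *ᵥ w = u := by rw [← huw, mulVec_mulVec, nonsing_inv_mul _ hP, one_mulVec]
  rw [← mulVec_mulVec, ← mulVec_mulVec, hinv, ← huw, ← mulVec_smul,
    (mulVec_injective_of_isUnit ((isUnit_iff_isUnit_det P).2 hP)).eq_iff]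

theorem vecMul_conj_eq_smul_iff {P : Matrix n n R} (hP : IsUnit P.det) (A : Matrix n n R)
    {u w : n → R} (hwu : w ᵥ* P = u) (r : R) :
    w ᵥ* (P * A * P⁻¹) = r • w ↔ u ᵥ* A = r • u := by
  have hinv : u ᵥ* P⁻¹ = w := by rw [← hwu, vecMul_vecMul, mul_nonsing_inv _ hP, vecMul_one]
  rw [← vecMul_vecMul, ← vecMul_vecMul, hwu, ← hinv, ← smul_vecMul,
    (vecMul_injective_of_isUnit ((isUnit_iff_isUnit_det _).2 (isUnit_nonsing_inv_det _ hP))).eq_iff]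

theorem mulVec_one_eq_of_sum_row_eq_zero {m : ℕ} {V : Matrix (Fin (m + 1)) (Fin (m + 1)) R}
    (hrows : ∀ i : Fin (m + 1), i ≠ 0 → ∑ j, V i j = 0) :
    V *ᵥ 1 = (∑ j, V 0 j) • Pi.single 0 1 := by
  ext i
  rcases eq_or_ne i 0 with rfl | hi
  · simp [mulVec, dotProduct]
  · simp [mulVec, dotProduct, hi, hrows i hi]

end Matrix

section blockOneMat

variable {m : ℕ}

theorem blockOneMat_col_zero (r : ℝ) (X : Matrix (Fin m) (Fin m) ℝ) :
    (blockOneMat r X).col 0 = r • Pi.single 0 1 := by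
  ext i
  by_cases hi : i = 0 <;> simp [blockOneMat, hi]

theorem blockOneMat_row_zero (r : ℝ) (X : Matrix (Fin m) (Fin m) ℝ) :
    (blockOneMat r X).row 0 = r • Pi.single 0 1 := by
  ext j
  by_cases hj : j = 0 <;> simp [blockOneMat, hj]

theorem eq_blockOneMat_submatrix_succ {M : Matrix (Fin (m + 1)) (Fin (m + 1)) ℝ} {r : ℝ}
    (hcol : M.col 0 = r • Pi.single 0 1) (hrow : M.row 0 = r • Pi.single 0 1) :
    M = blockOneMat r (M.submatrix Fin.succ Fin.succ) := by
  ext i j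
  cases i using Fin.cases with
  | zero => simpa [blockOneMat, Pi.single_apply] using congrFun hrow j
  | succ i =>
    cases j using Fin.cases with
    | zero => simpa [blockOneMat] using congrFun hcol i.succ
    | succ j => simp [blockOneMat]

theorem exists_eq_blockOneMat_iff (M : Matrix (Fin (m + 1)) (Fin (m + 1)) ℝ) (r : ℝ) :
    (∃ X, M = blockOneMat r X) ↔
      M *ᵥ Pi.single 0 1 = r • Pi.single 0 1 ∧ Pi.single 0 1 ᵥ* M = r • Pi.single 0 1 := by
  rw [mulVec_single_one, single_one_vecMul]
  constructor
  · rintro ⟨X, rfl⟩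
    exact ⟨blockOneMat_col_zero r X, blockOneMat_row_zero r X⟩
  · rintro ⟨hcol, hrow⟩
    exact ⟨_, eq_blockOneMat_submatrix_succ hcol hrow⟩

theorem exists_conj_eq_blockOneMat_iff {V : Matrix (Fin (m + 1)) (Fin (m + 1)) ℝ}
    (hV : IsUnit V.det) (hrow0 : ∃ c : ℝ, ∀ j, V 0 j = c)
    (hrows : ∀ i : Fin (m + 1), i ≠ 0 → ∑ j, V i j = 0) (r : ℝ)
    (A : Matrix (Fin (m + 1)) (Fin (m + 1)) ℝ) :
    (∃ X, V * A * V⁻¹ = blockOneMat r X) ↔ (∀ i, ∑ j, A i j = r) ∧ (∀ j, ∑ i, A i j = r) := by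
  obtain ⟨c, hc⟩ := hrow0
  have hc0 : c ≠ 0 := by
    rintro rfl
    exact hV.ne_zero (det_eq_zero_of_row_eq_zero 0 hc)
  have hsum0 : ∑ j, V 0 j ≠ 0 := by simp [hc, hc0, Nat.cast_add_one_ne_zero]
  have hrow_zero : Pi.single 0 1 ᵥ* V = c • 1 := by
    ext j
    simp [hc]
  rw [exists_eq_blockOneMat_iff, ← mulVec_smul_eq_smul_smul_iff _ hsum0,
    conj_mulVec_eq_smul_iff hV A (mulVec_one_eq_of_sum_row_eq_zero hrows),
    vecMul_conj_eq_smul_iff hV A hrow_zero, smul_vecMul_eq_smul_smul_iff _ hc0,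
    mulVec_one_eq_smul_one_iff, one_vecMul_eq_smul_one_iff]

end blockOneMat

theorem pattern_S_conjugation_general (m : ℕ)
    (V : Matrix (Fin (m + 1)) (Fin (m + 1)) ℝ) (hV : IsUnit V.det)
    (hrow0 : ∃ c : ℝ, ∀ j, V 0 j = c)
    (hrows : ∀ i : Fin (m + 1), i ≠ 0 → ∑ j, V i j = 0) :
    (∀ (r : ℝ) (X : Matrix (Fin m) (Fin m) ℝ),
        (∀ i, ∑ j, (V⁻¹ * blockOneMat r X * V) i j = r) ∧
        (∀ j, ∑ i, (V⁻¹ * blockOneMat r X * V) i j = r)) ∧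
    (∀ (r : ℝ) (A : Matrix (Fin (m + 1)) (Fin (m + 1)) ℝ),
        (∀ i, ∑ j, A i j = r) → (∀ j, ∑ i, A i j = r) →
        ∃ X : Matrix (Fin m) (Fin m) ℝ, V * A * V⁻¹ = blockOneMat r X) := by
  have key := exists_conj_eq_blockOneMat_iff hV hrow0 hrows
  refine ⟨fun r X => (key r _).1 ⟨X, ?_⟩, fun r A hrow hcol => (key r A).2 ⟨hrow, hcol⟩⟩
  rw [← Matrix.mul_assoc, ← Matrix.mul_assoc, mul_nonsing_inv _ hV, Matrix.one_mul,
    Matrix.mul_assoc, mul_nonsing_inv _ hV, Matrix.mul_one]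

/-- If `V` is an invertible `n × n` real matrix (with `n = m + 1 ≥ 2`) whose first row is a
scalar multiple of the all-ones row and each other row sums to `0`, then (a) for every `r` and
every `(n-1) × (n-1)` matrix `X`, the matrix `V⁻¹ * blockOneMat r X * V` has all row and
column sums equal to `r`; and (b) conversely every matrix `A` with all row and column sums
equal to `r` satisfies `V * A * V⁻¹ = blockOneMat r X` for some `X`. -/
theorem pattern_S_conjugation (m : ℕ) (hm : 1 ≤ m)
    (V : Matrix (Fin (m + 1)) (Fin (m + 1)) ℝ) (hV : IsUnit V.det)
    (hrow0 : ∃ c : ℝ, ∀ j, V 0 j = c)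
    (hrows : ∀ i : Fin (m + 1), i ≠ 0 → ∑ j, V i j = 0) :
    (∀ (r : ℝ) (X : Matrix (Fin m) (Fin m) ℝ),
        (∀ i, ∑ j, (V⁻¹ * blockOneMat r X * V) i j = r) ∧
        (∀ j, ∑ i, (V⁻¹ * blockOneMat r X * V) i j = r)) ∧
    (∀ (r : ℝ) (A : Matrix (Fin (m + 1)) (Fin (m + 1)) ℝ),
        (∀ i, ∑ j, A i j = r) → (∀ j, ∑ i, A i j = r) →
        ∃ X : Matrix (Fin m) (Fin m) ℝ, V * A * V⁻¹ = blockOneMat r X) :=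
  pattern_S_conjugation_general m V hV hrow0 hrows
end

section
/- Let λ and μ be real numbers. There exists a symmetric 3×3 doubly stochastic matrix whose eigenvalues, counted with algebraic multiplicity, are 1, λ, μ if and only if −1 ≤ λ ≤ 1, −1 ≤ μ ≤ 1, λ + 3μ + 2 ≥ 0, and 3λ + μ + 2 ≥ 0. -/
/-!
A symmetric `3 × 3` matrix with unit row sums is determined by its off-diagonal entries
`p, q, r`, and its characteristic polynomial is `(X - 1) (X² - (2 - 2s) X + (1 - 2s + 3e))` with
`s = p + q + r`, `e = pq + pr + qr`. So if its other eigenvalues are `λ, μ`, then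
`(1 - λ)(1 - μ) = 3e` and `(λ + 3μ + 2)(3λ + μ + 2) = 12 (ab + ac + bc)`, where `a, b, c` are the
diagonal entries. For a doubly stochastic matrix both products are nonnegative, and so are the
sums `2s` and `4(a + b + c)` of their factors; hence every factor is nonnegative, and
`λ, μ ≥ -1` follows from `3λ + μ + 2 ≥ 0`, `λ + 3μ + 2 ≥ 0` and `λ, μ ≤ 1`.
Conversely, for `μ ≤ λ` the choice `p = (2 + λ - 3μ)/6`, `q = r = (1 - λ)/3` realises `1, λ, μ`.
-/

open Matrix Polynomial

def DoublyStochastic {n : ℕ} (D : Matrix (Fin n) (Fin n) ℝ) : Prop :=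
  (∀ i j, 0 ≤ D i j) ∧ (∀ i, ∑ j, D i j = 1) ∧ (∀ j, ∑ i, D i j = 1)

lemma X_sq_sub_C_mul_X_add_C_eq_iff {R : Type*} [CommRing R] (s t a b : R) :
    X ^ 2 - C s * X + C t = (X - C a) * (X - C b) ↔ s = a + b ∧ t = a * b := by
  have h : (X - C a) * (X - C b) = X ^ 2 - C (a + b) * X + C (a * b) := by
    simp only [C_add, C_mul]; ring
  rw [h]
  refine ⟨fun he => ⟨?_, ?_⟩, fun ⟨hs, ht⟩ => by rw [hs, ht]⟩
  · linear_combination -(by simpa using congrArg (coeff · 1) he : -s = -(a + b))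
  · simpa using congrArg (coeff · 0) he

lemma nonneg_of_mul_nonneg_of_add_nonneg {R : Type*} [CommRing R] [LinearOrder R]
    [IsStrictOrderedRing R] {a b : R} (hab : 0 ≤ a * b) (h : 0 ≤ a + b) :
    0 ≤ a ∧ 0 ≤ b := by
  rcases mul_nonneg_iff.1 hab with h' | ⟨ha, hb⟩
  · exact h'
  · constructor <;> linarith

def symmOfOffDiag (p q r : ℝ) : Matrix (Fin 3) (Fin 3) ℝ :=
  !![1 - p - q, p, q; p, 1 - p - r, r; q, r, 1 - q - r]

lemma isSymm_symmOfOffDiag (p q r : ℝ) : (symmOfOffDiag p q r).IsSymm := by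
  ext i j
  fin_cases i <;> fin_cases j <;> rfl

lemma Matrix.IsSymm.eq_symmOfOffDiag {D : Matrix (Fin 3) (Fin 3) ℝ} (hsymm : D.IsSymm)
    (hrow : ∀ i, ∑ j, D i j = 1) : D = symmOfOffDiag (D 0 1) (D 0 2) (D 1 2) := by
  have h10 : D 1 0 = D 0 1 := hsymm.apply 0 1
  have h20 : D 2 0 = D 0 2 := hsymm.apply 0 2
  have h21 : D 2 1 = D 1 2 := hsymm.apply 1 2
  have h0 := hrow 0; have h1 := hrow 1; have h2 := hrow 2
  simp only [Fin.sum_univ_three] at h0 h1 h2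
  ext i j
  fin_cases i <;> fin_cases j <;> simp [symmOfOffDiag] <;> linarith

lemma doublyStochastic_symmOfOffDiag_iff {p q r : ℝ} :
    DoublyStochastic (symmOfOffDiag p q r) ↔
      0 ≤ p ∧ 0 ≤ q ∧ 0 ≤ r ∧ 0 ≤ 1 - p - q ∧ 0 ≤ 1 - p - r ∧ 0 ≤ 1 - q - r := by
  have hrow : ∀ i, ∑ j, symmOfOffDiag p q r i j = 1 := by
    intro i; fin_cases i <;> simp [symmOfOffDiag, Fin.sum_univ_three] <;> ring
  have hcol : ∀ j, ∑ i, symmOfOffDiag p q r i j = 1 := by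
    intro j; fin_cases j <;> simp [symmOfOffDiag, Fin.sum_univ_three] <;> ring
  simp only [DoublyStochastic, hrow, hcol, implies_true, and_true, Fin.forall_fin_succ,
    IsEmpty.forall_iff]
  simp [symmOfOffDiag]
  tauto

lemma charpoly_symmOfOffDiag (p q r : ℝ) :
    (symmOfOffDiag p q r).charpoly = (X - C 1) *
      (X ^ 2 - C (2 - 2 * (p + q + r)) * X +
        C (1 - 2 * (p + q + r) + 3 * (p * q + p * r + q * r))) := by
  simp [Matrix.charpoly, Matrix.det_fin_three, symmOfOffDiag, map_ofNat]
  ring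

lemma charpoly_symmOfOffDiag_eq_iff {p q r l m : ℝ} :
    (symmOfOffDiag p q r).charpoly = (X - C 1) * (X - C l) * (X - C m) ↔
      2 - 2 * (p + q + r) = l + m ∧
        1 - 2 * (p + q + r) + 3 * (p * q + p * r + q * r) = l * m := by
  rw [charpoly_symmOfOffDiag, mul_assoc, mul_right_inj' (X_sub_C_ne_zero 1),
    X_sq_sub_C_mul_X_add_C_eq_iff]

lemma sdiep_conditions_of_offDiag {p q r l m : ℝ}
    (hnn : 0 ≤ p ∧ 0 ≤ q ∧ 0 ≤ r ∧ 0 ≤ 1 - p - q ∧ 0 ≤ 1 - p - r ∧ 0 ≤ 1 - q - r)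
    (hsum : 2 - 2 * (p + q + r) = l + m)
    (hprod : 1 - 2 * (p + q + r) + 3 * (p * q + p * r + q * r) = l * m) :
    -1 ≤ l ∧ l ≤ 1 ∧ -1 ≤ m ∧ m ≤ 1 ∧ 0 ≤ l + 3 * m + 2 ∧ 0 ≤ 3 * l + m + 2 := by
  obtain ⟨hp, hq, hr, ha, hb, hc⟩ := hnn
  have hle_one : 0 ≤ 1 - l ∧ 0 ≤ 1 - m := by
    refine nonneg_of_mul_nonneg_of_add_nonneg ?_ (by linarith)
    have hid : (1 - l) * (1 - m) = 3 * (p * q + p * r + q * r) := by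
      linear_combination hsum - hprod
    rw [hid]
    positivity
  have hlin : 0 ≤ l + 3 * m + 2 ∧ 0 ≤ 3 * l + m + 2 := by
    refine nonneg_of_mul_nonneg_of_add_nonneg ?_ (by linarith)
    have hid : (l + 3 * m + 2) * (3 * l + m + 2) = 12 * ((1 - p - q) * (1 - p - r) +
        (1 - p - q) * (1 - q - r) + (1 - p - r) * (1 - q - r)) := by
      linear_combination -(3 * (l + m + 2 - 2 * (p + q + r)) + 8) * hsum - 4 * hprod
    rw [hid]
    positivity
  refine ⟨?_, ?_, ?_, ?_, hlin⟩ <;> linarith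

lemma exists_offDiag_of_sdiep_conditions {l m : ℝ} (hl : l ≤ 1) (hm : m ≤ 1)
    (hlm : 0 ≤ l + 3 * m + 2) (hml : 0 ≤ 3 * l + m + 2) :
    ∃ p q r : ℝ, (0 ≤ p ∧ 0 ≤ q ∧ 0 ≤ r ∧ 0 ≤ 1 - p - q ∧ 0 ≤ 1 - p - r ∧ 0 ≤ 1 - q - r) ∧
      2 - 2 * (p + q + r) = l + m ∧
        1 - 2 * (p + q + r) + 3 * (p * q + p * r + q * r) = l * m := by
  wlog hle : m ≤ l generalizing l m
  · obtain ⟨p, q, r, hnn, hsum, hprod⟩ := this hm hl (by linarith) (by linarith) (le_of_not_ge hle)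
    exact ⟨p, q, r, hnn, by rw [hsum, add_comm], by rw [hprod, mul_comm]⟩
  -- As `q = r`, `(1, -1, 0)` is an eigenvector for `m` and `(1, 1, -2)` one for `l`.
  refine ⟨(2 + l - 3 * m) / 6, (1 - l) / 3, (1 - l) / 3, ?_, by ring, by ring⟩
  refine ⟨?_, ?_, ?_, ?_, ?_, ?_⟩ <;> linarith

/-- There exists a symmetric `3 × 3` doubly stochastic matrix with eigenvalues
(with algebraic multiplicity) `1, λ, μ` if and only if `-1 ≤ λ ≤ 1`, `-1 ≤ μ ≤ 1`,
`λ + 3μ + 2 ≥ 0` and `3λ + μ + 2 ≥ 0`. -/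
theorem sdiep_three_iff (lam mu : ℝ) :
    (∃ D : Matrix (Fin 3) (Fin 3) ℝ, D.IsSymm ∧ DoublyStochastic D ∧
        D.charpoly = (X - C 1) * (X - C lam) * (X - C mu)) ↔
      (-1 ≤ lam ∧ lam ≤ 1 ∧ -1 ≤ mu ∧ mu ≤ 1 ∧
        0 ≤ lam + 3 * mu + 2 ∧ 0 ≤ 3 * lam + mu + 2) := by
  constructor
  · rintro ⟨D, hsymm, hD, hchar⟩
    have hDeq := hsymm.eq_symmOfOffDiag hD.2.1
    rw [hDeq] at hD hchar
    obtain ⟨hsum, hprod⟩ := charpoly_symmOfOffDiag_eq_iff.1 hchar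
    exact sdiep_conditions_of_offDiag (doublyStochastic_symmOfOffDiag_iff.1 hD) hsum hprod
  · rintro ⟨-, hl, -, hm, hlm, hml⟩
    obtain ⟨p, q, r, hnn, hsum, hprod⟩ := exists_offDiag_of_sdiep_conditions hl hm hlm hml
    exact ⟨symmOfOffDiag p q r, isSymm_symmOfOffDiag p q r,
      doublyStochastic_symmOfOffDiag_iff.2 hnn, charpoly_symmOfOffDiag_eq_iff.2 ⟨hsum, hprod⟩⟩
end

section
/- Let k ≥ 1, n = 4k+1, m = 2k, and let 1 ≥ λ₂ ≥ ... ≥ λₙ ≥ −1 be real numbers with 1 + λ₂ + ... + λₙ ≥ 0. Let α₁ < α₂ < ... < α_m be the increasing enumeration of the set {j : 3 ≤ j ≤ n−1, j ≡ 0 or 3 (mod 4)} (namely 3, 4, 7, 8, ..., n−2, n−1), and let β₁ < ... < β_{m−1} be the increasing enumeration of {j : 5 ≤ j ≤ n, j ≡ 1 or 2 (mod 4)} (namely 5, 6, 9, 10, ..., n−4, n−3, n). If both 1/n + ((n−m−1)/(n(m+1)))·λ₂ + Σ_{j=1}^{m} λ_{α_j}/((m−j+1)(m−j+2)) ≥ 0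 and 1/n + ((n−m)/(n·m))·λ₂ + Σ_{j=1}^{m−1} λ_{β_j}/((m−j)(m−j+1)) ≥ 0 hold, then there exists an n×n symmetric doubly stochastic matrix whose eigenvalues, counted with algebraic multiplicity, are 1, λ₂, ..., λₙ. -/
open Matrix Polynomial

open Finset

/-!
Write `n = 2m + 1` and split the coordinates into `P = {0, …, m}` and `Q = {m + 1, …, 2m}`.
The all-ones vector, the vector equal to `m` on `P` and `-(m + 1)` on `Q`, and the Helmert
vectors `(1, …, 1, -t, 0, …)` of sizes `t = 1, …, m` inside `P` and `t = 1, …, m - 1` inside `Q`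
form an orthogonal (Soules) basis: of any two of them, one is constant on the support of the
other, which has sum zero. Hence `D = ∑ λᵢ uᵢ uᵢᵀ / ‖uᵢ‖²` is symmetric, has spectrum `(λᵢ)` and
row sums `λ₁ = 1`.

Giving the Helmert vector of size `t` in `P` the eigenvalue `λ_{α_{m+1-t}}` and the one in `Q` the
eigenvalue `λ_{β_{m-t}}` makes the eigenvalues increase with `t` inside each block. Comparing with
the telescoping sum `∑ 1 / (t (t + 1))`, a diagonal entry of `D` is at least the left-hand side of
the hypothesis for its block, an off-diagonal entry inside `P` (resp. `Q`) is at least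
`1/n + mλ₂/(n(m+1)) - λ₃/(m+1)` (resp. `1/n + (m+1)λ₂/(nm) - λ₅/m`), and an entry between the
blocks is `(1 - λ₂)/n`; all of these are nonnegative because `λ₅ ≤ λ₃ ≤ λ₂ ≤ 1`.
-/

section TransposeMulDiagonalMul

variable {ι R K : Type*} [Fintype ι] [DecidableEq ι]

theorem Matrix.transpose_mul_diagonal_mul_apply [CommSemiring R] (U : Matrix ι ι R) (w : ι → R)
    (x y : ι) : (Uᵀ * diagonal w * U) x y = ∑ i, w i * (U i x * U i y) := by
  rw [mul_apply]
  simp only [mul_diagonal, transpose_apply]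
  exact sum_congr rfl fun i _ => by ring

theorem Matrix.isSymm_transpose_mul_diagonal_mul [CommSemiring R] (U : Matrix ι ι R) (w : ι → R) :
    (Uᵀ * diagonal w * U).IsSymm := by
  simp [IsSymm, transpose_mul, Matrix.mul_assoc]

variable [Field K] {U : Matrix ι ι K} {N : ι → K}

theorem Matrix.charpoly_transpose_mul_diagonal_mul (hU : U * Uᵀ = diagonal N)
    (hN : ∀ i, N i ≠ 0) (E : ι → K) :
    (Uᵀ * diagonal (fun i => E i / N i) * U).charpoly = ∏ i, (X - C (E i)) := by
  rw [Matrix.mul_assoc, charpoly_mul_comm, Matrix.mul_assoc, hU, diagonal_mul_diagonal,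
    ← charpoly_diagonal]
  congr
  funext i
  exact div_mul_cancel₀ _ (hN i)

theorem Matrix.sum_transpose_mul_diagonal_mul_apply (hU : U * Uᵀ = diagonal N)
    (hN : ∀ i, N i ≠ 0) (E : ι → K) {i₀ : ι} (hi₀ : ∀ y, U i₀ y = 1) (x : ι) :
    ∑ y, (Uᵀ * diagonal (fun i => E i / N i) * U) x y = E i₀ := by
  have hrow (i : ι) : ∑ y, U i y = if i = i₀ then N i₀ else 0 := by
    have := congrFun (congrFun hU i) i₀
    simp only [mul_apply, transpose_apply, hi₀, mul_one, diagonal_apply] at this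
    rw [this]; split_ifs with h <;> simp [h]
  simp only [transpose_mul_diagonal_mul_apply, ← mul_assoc]
  rw [sum_comm]
  simp only [← mul_sum, hrow, mul_ite, mul_zero, sum_ite_eq', mem_univ, if_true, hi₀, mul_one]
  exact div_mul_cancel₀ _ (hN i₀)

end TransposeMulDiagonalMul

theorem Finset.sum_mul_eq_zero_of_eqOn_support {ι R : Type*} [NonUnitalNonAssocSemiring R]
    {s : Finset ι} {v w : ι → R} (c : R) (hv : ∀ x ∈ s, w x ≠ 0 → v x = c)
    (hw : ∑ x ∈ s, w x = 0) : ∑ x ∈ s, v x * w x = 0 := by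
  have hvw : ∀ x ∈ s, v x * w x = c * w x := fun x hx => by
    by_cases h : w x = 0
    · rw [h, mul_zero, mul_zero]
    · rw [hv x hx h]
  rw [sum_congr rfl hvw, ← mul_sum, hw, mul_zero]

theorem antitoneOn_Icc_of_succ_le {β : Type*} [Preorder β] {f : ℕ → β} {a b : ℕ}
    (h : ∀ j, a ≤ j → j < b → f (j + 1) ≤ f j) : AntitoneOn f (Set.Icc a b) :=
  antitoneOn_of_succ_le Set.ordConnected_Icc fun j _ hj hj' => by
    rw [Order.succ_eq_add_one] at hj' ⊢
    exact h j hj.1 (by simp only [Set.mem_Icc] at hj'; omega)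

theorem one_div_add_div_mul_sub_div_nonneg {a b μ ν : ℝ} (ha : 0 < a) (hb : 0 ≤ b) (hμ : μ ≤ 1)
    (hν : ν ≤ μ) : 0 ≤ 1 / (a + b) + b / ((a + b) * a) * μ - ν / a := by
  rw [show 1 / (a + b) + b / ((a + b) * a) * μ - ν / a =
    (a * (1 - ν) + b * (μ - ν)) / ((a + b) * a) by field_simp; ring]
  exact div_nonneg (by nlinarith) (by positivity)

section Telescoping

theorem sum_Ioc_one_div_mul_add_one (a b : ℕ) (hab : a ≤ b) :
    ∑ t ∈ Ioc a b, 1 / ((t : ℝ) * (t + 1)) = 1 / (a + 1) - 1 / (b + 1) := by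
  induction b, hab using Nat.le_induction with
  | base => simp
  | succ b hab ih =>
    rw [sum_Ioc_succ_top hab, ih]
    push_cast
    field_simp
    ring

variable {ν : ℕ → ℝ} {a b : ℕ} {c : ℝ}

theorem le_sum_Ioc_div_mul_add_one (hab : a ≤ b) (h : ∀ t ∈ Ioc a b, c ≤ ν t) :
    c * (1 / (a + 1) - 1 / (b + 1)) ≤ ∑ t ∈ Ioc a b, ν t / ((t : ℝ) * (t + 1)) := by
  rw [← sum_Ioc_one_div_mul_add_one a b hab, mul_sum]
  exact sum_le_sum fun t ht => by
    rw [mul_one_div]; exact div_le_div_of_nonneg_right (h t ht) (by positivity)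

theorem sum_Ioc_div_mul_add_one_le (hab : a ≤ b) (h : ∀ t ∈ Ioc a b, ν t ≤ c) :
    ∑ t ∈ Ioc a b, ν t / ((t : ℝ) * (t + 1)) ≤ c * (1 / (a + 1) - 1 / (b + 1)) := by
  rw [← sum_Ioc_one_div_mul_add_one a b hab, mul_sum]
  exact sum_le_sum fun t ht => by
    rw [mul_one_div]; exact div_le_div_of_nonneg_right (h t ht) (by positivity)

end Telescoping

def blockVec (o a b x : ℕ) : ℝ :=
  if x < o then 0 else if x < o + a then b else if x < o + a + b then -a else 0

section BlockVec

variable {o a b x : ℕ}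

theorem blockVec_of_lt (h : x < o) : blockVec o a b x = 0 := by simp [blockVec, h]

theorem blockVec_of_mem_left (h₁ : o ≤ x) (h₂ : x < o + a) : blockVec o a b x = b := by
  simp [blockVec, h₂, not_lt.2 h₁]

theorem blockVec_of_mem_right (h₁ : o + a ≤ x) (h₂ : x < o + a + b) : blockVec o a b x = -a := by
  simp [blockVec, h₂, not_lt.2 h₁, not_lt.2 (le_trans (Nat.le_add_right o a) h₁)]

theorem blockVec_of_ge (h : o + a + b ≤ x) : blockVec o a b x = 0 := by
  simp only [blockVec]; split_ifs <;> first | rfl | omega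

theorem mem_of_blockVec_ne_zero (h : blockVec o a b x ≠ 0) : o ≤ x ∧ x < o + a + b := by
  by_contra h'
  rcases not_and_or.1 h' with h' | h'
  · exact h (blockVec_of_lt (not_le.1 h'))
  · exact h (blockVec_of_ge (not_lt.1 h'))

theorem sum_range_comp_blockVec (f : ℝ → ℝ) (hf : f 0 = 0) {n : ℕ} (h : o + a + b ≤ n) :
    ∑ x ∈ range n, f (blockVec o a b x) = a * f b + b * f (-a) := by
  rw [range_eq_Ico, ← sum_Ico_consecutive _ (Nat.zero_le o) (by omega : o ≤ n),
    ← sum_Ico_consecutive _ (Nat.le_add_right o a) (by omega : o + a ≤ n),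
    ← sum_Ico_consecutive _ (Nat.le_add_right (o + a) b) h]
  have h₀ : ∑ x ∈ Ico 0 o, f (blockVec o a b x) = 0 :=
    sum_eq_zero fun x hx => by rw [blockVec_of_lt (mem_Ico.1 hx).2, hf]
  have h₁ : ∑ x ∈ Ico o (o + a), f (blockVec o a b x) = a * f b := by
    rw [sum_congr rfl fun x hx => by rw [blockVec_of_mem_left (mem_Ico.1 hx).1 (mem_Ico.1 hx).2]]
    simp
  have h₂ : ∑ x ∈ Ico (o + a) (o + a + b), f (blockVec o a b x) = b * f (-a) := by
    rw [sum_congr rfl fun x hx => by rw [blockVec_of_mem_right (mem_Ico.1 hx).1 (mem_Ico.1 hx).2]]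
    simp
  have h₃ : ∑ x ∈ Ico (o + a + b) n, f (blockVec o a b x) = 0 :=
    sum_eq_zero fun x hx => by rw [blockVec_of_ge (mem_Ico.1 hx).1, hf]
  rw [h₀, h₁, h₂, h₃]
  ring

theorem sum_range_blockVec {n : ℕ} (h : o + a + b ≤ n) : ∑ x ∈ range n, blockVec o a b x = 0 := by
  simpa [mul_comm] using sum_range_comp_blockVec id rfl h

theorem sum_range_blockVec_sq {n : ℕ} (h : o + a + b ≤ n) :
    ∑ x ∈ range n, blockVec o a b x ^ 2 = a * b * (a + b) := by
  rw [sum_range_comp_blockVec (· ^ 2) (by simp) h]; ring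

end BlockVec

noncomputable def helmertKernel (ν : ℕ → ℝ) (o q x y : ℕ) : ℝ :=
  ∑ t ∈ Ioc 0 q, ν t / ((t : ℝ) * (t + 1)) * (blockVec o t 1 x * blockVec o t 1 y)

section HelmertKernel

variable {ν : ℕ → ℝ} {o q x y : ℕ}

theorem helmertKernel_comm : helmertKernel ν o q x y = helmertKernel ν o q y x := by
  simp only [helmertKernel, mul_comm (blockVec o _ 1 x)]

theorem helmertKernel_eq_zero (hx : x < o ∨ o + q < x) : helmertKernel ν o q x y = 0 :=
  sum_eq_zero fun t ht => by
    have := (mem_Ioc.1 ht).2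
    rcases hx with hx | hx
    · rw [blockVec_of_lt hx, zero_mul, mul_zero]
    · rw [blockVec_of_ge (by omega), zero_mul, mul_zero]

theorem helmertKernel_eq_of_le {s : ℕ} (hs : 0 < s) (hsq : s ≤ q) (hox : o ≤ x)
    (hxs : x ≤ o + s) :
    helmertKernel ν o q x (o + s) =
      ν s / ((s : ℝ) * (s + 1)) * (blockVec o s 1 x * -s) +
        ∑ t ∈ Ioc s q, ν t / ((t : ℝ) * (t + 1)) := by
  rw [helmertKernel, ← sum_Ioc_consecutive _ (Nat.zero_le s) hsq,
    sum_eq_single_of_mem s (mem_Ioc.2 ⟨hs, le_rfl⟩) fun t ht hts => by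
      rw [blockVec_of_ge (x := o + s) (by have := (mem_Ioc.1 ht).2; omega), mul_zero, mul_zero],
    blockVec_of_mem_right le_rfl (by omega)]
  congr 1
  refine sum_congr rfl fun t ht => ?_
  have := (mem_Ioc.1 ht).1
  rw [blockVec_of_mem_left hox (by omega), blockVec_of_mem_left (by omega) (by omega)]
  simp

theorem neg_div_le_helmertKernel (hν : MonotoneOn ν (Ioc 0 q)) (hox : o ≤ x) (hxy : x < y)
    (hyq : y ≤ o + q) : -ν q / (q + 1) ≤ helmertKernel ν o q x y := by
  obtain ⟨s, rfl⟩ : ∃ s, y = o + s := ⟨y - o, by omega⟩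
  have hs : s ∈ Ioc 0 q := mem_Ioc.2 ⟨by omega, by omega⟩
  have htail := le_sum_Ioc_div_mul_add_one (hab := (mem_Ioc.1 hs).2)
    fun t ht => hν hs (mem_Ioc.2 ⟨by have := (mem_Ioc.1 ht).1; omega, (mem_Ioc.1 ht).2⟩)
      (mem_Ioc.1 ht).1.le
  have hνs : ν s ≤ ν q := hν hs (mem_Ioc.2 ⟨by omega, le_rfl⟩) (mem_Ioc.1 hs).2
  rw [helmertKernel_eq_of_le (mem_Ioc.1 hs).1 (mem_Ioc.1 hs).2 hox hxy.le,
    blockVec_of_mem_left hox hxy]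
  have hs0 : (0 : ℝ) < s := by exact_mod_cast (mem_Ioc.1 hs).1
  have hq : (0 : ℝ) < q + 1 := by positivity
  calc -ν q / (q + 1) ≤ -ν s / (q + 1) := by gcongr
    _ = ν s / (s * (s + 1)) * (1 * -s) + ν s * (1 / (s + 1) - 1 / (q + 1)) := by
      field_simp; ring
    _ ≤ _ := by linarith

theorem sum_le_helmertKernel_self (hν : MonotoneOn ν (Ioc 0 q)) (hoy : o ≤ y) (hyq : y ≤ o + q) :
    ∑ t ∈ Ioc 0 q, ν t / ((t : ℝ) * (t + 1)) ≤ helmertKernel ν o q y y := by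
  obtain ⟨s, rfl⟩ : ∃ s, y = o + s := ⟨y - o, by omega⟩
  rcases Nat.eq_zero_or_pos s with rfl | hs
  · refine (sum_congr rfl fun t ht => ?_).le
    rw [blockVec_of_mem_left hoy (by have := (mem_Ioc.1 ht).1; omega)]
    simp
  have hhead := sum_Ioc_div_mul_add_one_le (ν := ν) (c := ν s) (Nat.zero_le s)
    fun t ht => hν (mem_Ioc.2 ⟨(mem_Ioc.1 ht).1, by have := (mem_Ioc.1 ht).2; omega⟩)
      (mem_Ioc.2 ⟨hs, by omega⟩) (mem_Ioc.1 ht).2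
  rw [helmertKernel_eq_of_le hs (by omega) hoy le_rfl, blockVec_of_mem_right le_rfl (by omega),
    ← sum_Ioc_consecutive _ (Nat.zero_le s) (by omega : s ≤ q)]
  have hs0 : (0 : ℝ) < s := by exact_mod_cast hs
  have : ν s * (1 / ((0 : ℕ) + 1) - 1 / (s + 1)) = ν s / (s * (s + 1)) * (-s * -s) := by
    field_simp; ring
  linarith

end HelmertKernel

def soulesVec (m i x : ℕ) : ℝ :=
  if i = 0 then 1
  else if i = 1 then blockVec 0 (m + 1) m x
  else if i ≤ m + 1 then blockVec 0 (i - 1) 1 x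
  else blockVec (m + 1) (i - m - 1) 1 x

def soulesNormSq (m i : ℕ) : ℝ :=
  if i = 0 then 2 * m + 1
  else if i = 1 then m * (m + 1) * (2 * m + 1)
  else if i ≤ m + 1 then (i - 1 : ℕ) * ((i - 1 : ℕ) + 1)
  else (i - m - 1 : ℕ) * ((i - m - 1 : ℕ) + 1)

section Soules

variable {m i j x : ℕ}

theorem soulesVec_zero : soulesVec m 0 x = 1 := rfl

theorem soulesVec_one : soulesVec m 1 x = blockVec 0 (m + 1) m x := rfl

theorem soulesVec_of_le (hi : 2 ≤ i) (hi' : i ≤ m + 1) :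
    soulesVec m i x = blockVec 0 (i - 1) 1 x := by
  simp [soulesVec, hi', show i ≠ 0 by omega, show i ≠ 1 by omega]

theorem soulesVec_of_lt (hi : m + 1 < i) : soulesVec m i x = blockVec (m + 1) (i - m - 1) 1 x := by
  simp [soulesVec, show ¬ i ≤ m + 1 by omega, show i ≠ 0 by omega, show i ≠ 1 by omega]

theorem sum_range_soulesVec (hi : 1 ≤ i) (hi' : i ≤ 2 * m) :
    ∑ x ∈ range (2 * m + 1), soulesVec m i x = 0 := by
  unfold soulesVec
  split_ifs <;> first | omega | exact sum_range_blockVec (by omega)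

theorem sum_range_soulesVec_sq (hi : i ≤ 2 * m) :
    ∑ x ∈ range (2 * m + 1), soulesVec m i x ^ 2 = soulesNormSq m i := by
  unfold soulesVec soulesNormSq
  split_ifs <;> first | simp | (rw [sum_range_blockVec_sq (by omega)]; push_cast; ring)

theorem sum_range_soulesVec_mul_of_lt (hij : i < j) (hj : j ≤ 2 * m) :
    ∑ x ∈ range (2 * m + 1), soulesVec m i x * soulesVec m j x = 0 := by
  rcases (by omega : i = 0 ∨ i = 1 ∨ 2 ≤ i) with rfl | rfl | hi
  · simpa [soulesVec_zero] using sum_range_soulesVec (by omega) hj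
  · refine sum_mul_eq_zero_of_eqOn_support (if j ≤ m + 1 then (m : ℝ) else -((m + 1 : ℕ) : ℝ))
      (fun x _ hjx => ?_) (sum_range_soulesVec (by omega) hj)
    rw [soulesVec_one]
    split_ifs with hjm
    · rw [soulesVec_of_le (by omega) hjm] at hjx
      have := mem_of_blockVec_ne_zero hjx
      exact blockVec_of_mem_left (by omega) (by omega)
    · rw [soulesVec_of_lt (by omega)] at hjx
      have := mem_of_blockVec_ne_zero hjx
      exact blockVec_of_mem_right (by omega) (by omega)
  · simp_rw [mul_comm (soulesVec m i _)]
    refine sum_mul_eq_zero_of_eqOn_support (if i ≤ m + 1 ∧ m + 1 < j then 0 else 1)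
      (fun x _ hix => ?_) (sum_range_soulesVec (by omega) (by omega))
    split_ifs with hij'
    · rw [soulesVec_of_le hi hij'.1] at hix
      have := mem_of_blockVec_ne_zero hix
      rw [soulesVec_of_lt hij'.2, blockVec_of_lt (by omega)]
    · rcases le_or_gt j (m + 1) with hj' | hj'
      · rw [soulesVec_of_le hi (by omega)] at hix
        have := mem_of_blockVec_ne_zero hix
        rw [soulesVec_of_le (by omega) hj', blockVec_of_mem_left (by omega) (by omega)]
        simp
      · rw [soulesVec_of_lt (by omega)] at hix
        have := mem_of_blockVec_ne_zero hix
        rw [soulesVec_of_lt hj', blockVec_of_mem_left (by omega) (by omega)]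
        simp

end Soules

theorem sum_range_eq_add_sum_Ioc_add_sum_Ioc {M : Type*} [AddCommMonoid M] (g : ℕ → M) {m : ℕ}
    (hm : 0 < m) :
    ∑ i ∈ range (2 * m + 1), g i =
      g 0 + g 1 + ∑ t ∈ Ioc 0 m, g (t + 1) + ∑ t ∈ Ioc 0 (m - 1), g (t + (m + 1)) := by
  have hP : Ico 2 (m + 2) = (Ioc 0 m).map (addRightEmbedding 1) := by
    ext; simp only [mem_Ico, map_add_right_Ioc, zero_add, mem_Ioc]; omega
  have hQ : Ico (m + 2) (2 * m + 1) = (Ioc 0 (m - 1)).map (addRightEmbedding (m + 1)) := by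
    ext; simp only [mem_Ico, map_add_right_Ioc, zero_add, mem_Ioc]; omega
  rw [range_eq_Ico, ← sum_Ico_consecutive _ (by omega : 0 ≤ m + 2) (by omega : m + 2 ≤ 2 * m + 1),
    ← sum_Ico_consecutive _ (by omega : 0 ≤ 2) (by omega : 2 ≤ m + 2), hP, hQ, sum_map, sum_map]
  simp [sum_range_succ, add_assoc]

noncomputable def soulesBasis (m : ℕ) : Matrix (Fin (2 * m + 1)) (Fin (2 * m + 1)) ℝ :=
  of fun i x => soulesVec m i x

noncomputable def soulesEigenvalue (m : ℕ) (μ : ℝ) (νP νQ : ℕ → ℝ) (i : ℕ) : ℝ :=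
  if i = 0 then 1 else if i = 1 then μ else if i ≤ m + 1 then νP (i - 1) else νQ (i - m - 1)

noncomputable def soulesMatrix (m : ℕ) (μ : ℝ) (νP νQ : ℕ → ℝ) :
    Matrix (Fin (2 * m + 1)) (Fin (2 * m + 1)) ℝ :=
  (soulesBasis m)ᵀ *
    diagonal (fun i : Fin (2 * m + 1) => soulesEigenvalue m μ νP νQ i / soulesNormSq m i) *
      soulesBasis m

section SoulesMatrix

variable {m : ℕ} {μ : ℝ} {νP νQ : ℕ → ℝ}

theorem soulesNormSq_ne_zero (hm : 0 < m) {i : ℕ} : soulesNormSq m i ≠ 0 := by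
  unfold soulesNormSq
  split_ifs <;>
    first | positivity | exact mul_ne_zero (Nat.cast_ne_zero.2 (by omega)) (by positivity)

theorem soulesBasis_mul_transpose :
    soulesBasis m * (soulesBasis m)ᵀ = diagonal fun i : Fin (2 * m + 1) => soulesNormSq m i := by
  ext i j
  rw [mul_apply, diagonal_apply]
  simp only [soulesBasis, of_apply, transpose_apply]
  rw [Fin.sum_univ_eq_sum_range (fun x => soulesVec m i x * soulesVec m j x)]
  split_ifs with h
  · subst h
    simp_rw [← sq]
    exact sum_range_soulesVec_sq (by omega)
  · rcases lt_or_gt_of_ne (Fin.val_ne_of_ne h) with h | h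
    · exact sum_range_soulesVec_mul_of_lt h (by omega)
    · simp_rw [mul_comm (soulesVec m i _)]
      exact sum_range_soulesVec_mul_of_lt h (by omega)

theorem soulesMatrix_isSymm : (soulesMatrix m μ νP νQ).IsSymm :=
  isSymm_transpose_mul_diagonal_mul _ _

theorem soulesMatrix_charpoly (hm : 0 < m) :
    (soulesMatrix m μ νP νQ).charpoly =
      ∏ i : Fin (2 * m + 1), (X - C (soulesEigenvalue m μ νP νQ i)) :=
  charpoly_transpose_mul_diagonal_mul soulesBasis_mul_transpose (fun _ => soulesNormSq_ne_zero hm) _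

theorem sum_soulesMatrix_apply (hm : 0 < m) (x : Fin (2 * m + 1)) :
    ∑ y, soulesMatrix m μ νP νQ x y = 1 :=
  sum_transpose_mul_diagonal_mul_apply soulesBasis_mul_transpose
    (fun _ => soulesNormSq_ne_zero hm) _ (i₀ := 0) (fun _ => rfl) x

theorem soulesMatrix_apply (hm : 0 < m) (x y : Fin (2 * m + 1)) :
    soulesMatrix m μ νP νQ x y =
      1 / (2 * m + 1) + μ / (m * (m + 1) * (2 * m + 1)) *
        (blockVec 0 (m + 1) m x * blockVec 0 (m + 1) m y) +
      helmertKernel νP 0 m x y + helmertKernel νQ (m + 1) (m - 1) x y := by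
  rw [soulesMatrix, transpose_mul_diagonal_mul_apply]
  simp only [soulesBasis, of_apply]
  rw [Fin.sum_univ_eq_sum_range (fun i => soulesEigenvalue m μ νP νQ i / soulesNormSq m i *
    (soulesVec m i x * soulesVec m i y)), sum_range_eq_add_sum_Ioc_add_sum_Ioc _ hm]
  congr 1
  congr 1
  · simp [soulesEigenvalue, soulesNormSq, soulesVec_zero, soulesVec_one]
  · refine sum_congr rfl fun t ht => ?_
    have := mem_Ioc.1 ht
    rw [soulesVec_of_le (by omega) (by omega), soulesVec_of_le (by omega) (by omega)]
    simp [soulesEigenvalue, soulesNormSq, show t ≠ 0 by omega, show t ≤ m by omega]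
  · refine sum_congr rfl fun t ht => ?_
    have := mem_Ioc.1 ht
    rw [soulesVec_of_lt (by omega), soulesVec_of_lt (by omega)]
    simp [soulesEigenvalue, soulesNormSq, show ¬ t + (m + 1) ≤ m + 1 by omega,
      show t + (m + 1) - m - 1 = t by omega, show t + (m + 1) ≠ 1 by omega]

theorem soulesMatrix_apply_of_le_of_le (hm : 0 < m) {x y : Fin (2 * m + 1)} (hx : (x : ℕ) ≤ m)
    (hy : (y : ℕ) ≤ m) :
    soulesMatrix m μ νP νQ x y =
      1 / (2 * m + 1) + m / ((2 * m + 1) * (m + 1)) * μ + helmertKernel νP 0 m x y := by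
  rw [soulesMatrix_apply hm, blockVec_of_mem_left (Nat.zero_le _) (by omega),
    blockVec_of_mem_left (Nat.zero_le _) (by omega),
    helmertKernel_eq_zero (o := m + 1) (.inl (by omega))]
  have : (0 : ℝ) < m := by exact_mod_cast hm
  field_simp
  ring

theorem soulesMatrix_apply_of_le_of_lt (hm : 0 < m) {x y : Fin (2 * m + 1)} (hx : (x : ℕ) ≤ m)
    (hy : m < y) : soulesMatrix m μ νP νQ x y = (1 - μ) / (2 * m + 1) := by
  rw [soulesMatrix_apply hm, blockVec_of_mem_left (Nat.zero_le _) (by omega),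
    blockVec_of_mem_right (by omega) (by omega), helmertKernel_comm,
    helmertKernel_eq_zero (.inr (by omega)), helmertKernel_eq_zero (.inl (by omega))]
  have : (0 : ℝ) < m := by exact_mod_cast hm
  field_simp
  push_cast
  ring

theorem soulesMatrix_apply_of_lt_of_lt (hm : 0 < m) {x y : Fin (2 * m + 1)} (hx : m < x)
    (hy : m < y) :
    soulesMatrix m μ νP νQ x y =
      1 / (2 * m + 1) + (m + 1) / ((2 * m + 1) * m) * μ +
        helmertKernel νQ (m + 1) (m - 1) x y := by
  rw [soulesMatrix_apply hm, blockVec_of_mem_right (by omega) (by omega),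
    blockVec_of_mem_right (by omega) (by omega), helmertKernel_eq_zero (.inr (by omega))]
  have : (0 : ℝ) < m := by exact_mod_cast hm
  field_simp
  push_cast
  ring

theorem soulesMatrix_nonneg (hm : 0 < m) (hμ : μ ≤ 1) (hP : MonotoneOn νP (Ioc 0 m))
    (hQ : MonotoneOn νQ (Ioc 0 (m - 1))) (hPμ : νP m ≤ μ) (hQμ : νQ (m - 1) ≤ μ)
    (hc₁ : 0 ≤ 1 / (2 * m + 1) + m / ((2 * m + 1) * (m + 1)) * μ +
      ∑ t ∈ Ioc 0 m, νP t / ((t : ℝ) * (t + 1)))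
    (hc₂ : 0 ≤ 1 / (2 * m + 1) + (m + 1) / ((2 * m + 1) * m) * μ +
      ∑ t ∈ Ioc 0 (m - 1), νQ t / ((t : ℝ) * (t + 1)))
    (x y : Fin (2 * m + 1)) : 0 ≤ soulesMatrix m μ νP νQ x y := by
  wlog hxy : (x : ℕ) ≤ y generalizing x y
  · rw [soulesMatrix_isSymm.apply]
    exact this y x (by omega)
  have hm' : (0 : ℝ) < m := by exact_mod_cast hm
  have hy := y.isLt
  rcases le_or_gt (y : ℕ) m with hym | hym
  · rw [soulesMatrix_apply_of_le_of_le hm (by omega) hym]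
    rcases hxy.lt_or_eq with hxy | hxy
    · have hK := neg_div_le_helmertKernel hP (Nat.zero_le _) hxy (by omega)
      have key := one_div_add_div_mul_sub_div_nonneg (a := m + 1) (by positivity) hm'.le hμ hPμ
      rw [show (m + 1 + m : ℝ) = 2 * m + 1 by ring] at key
      linarith [neg_div (m + 1 : ℝ) (νP m)]
    · obtain rfl := Fin.val_injective hxy
      linarith [sum_le_helmertKernel_self (o := 0) hP (Nat.zero_le x) (by omega)]
  rcases le_or_gt (x : ℕ) m with hxm | hxm
  · rw [soulesMatrix_apply_of_le_of_lt hm hxm hym]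
    exact div_nonneg (by linarith) (by positivity)
  rw [soulesMatrix_apply_of_lt_of_lt hm hxm hym]
  rcases hxy.lt_or_eq with hxy | hxy
  · have hK := neg_div_le_helmertKernel hQ hxm hxy (by omega)
    rw [Nat.cast_sub (by omega), Nat.cast_one, sub_add_cancel] at hK
    have key := one_div_add_div_mul_sub_div_nonneg (b := m + 1) hm' (by positivity) hμ hQμ
    rw [show (m + (m + 1) : ℝ) = 2 * m + 1 by ring] at key
    linarith [neg_div (m : ℝ) (νQ (m - 1))]
  · obtain rfl := Fin.val_injective hxy
    linarith [sum_le_helmertKernel_self (o := m + 1) hQ hxm (by omega)]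

theorem doublyStochastic_soulesMatrix (hm : 0 < m)
    (h : ∀ x y, 0 ≤ soulesMatrix m μ νP νQ x y) : DoublyStochastic (soulesMatrix m μ νP νQ) :=
  ⟨h, sum_soulesMatrix_apply hm, fun y => by
    rw [← sum_soulesMatrix_apply hm y]
    exact sum_congr rfl fun x _ => soulesMatrix_isSymm.apply y x⟩

end SoulesMatrix

def alphaIndex (j : ℕ) : ℕ := if Odd j then 2 * j + 1 else 2 * j

def betaIndex (j : ℕ) : ℕ := if Odd j then 2 * j + 3 else 2 * j + 2

/-- The index `j` of the eigenvalue `λ_j` that is put on the Soules vector `r + 1`. -/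
def sdiepIndex (m r : ℕ) : ℕ :=
  if r = 0 then 2 else if r ≤ m then alphaIndex (m + 1 - r) else betaIndex (2 * m - r)

theorem alphaIndex_le_alphaIndex {i j : ℕ} (h : i ≤ j) : alphaIndex i ≤ alphaIndex j := by
  simp only [alphaIndex, Nat.odd_iff]; split_ifs <;> omega

theorem betaIndex_le_betaIndex {i j : ℕ} (h : i ≤ j) : betaIndex i ≤ betaIndex j := by
  simp only [betaIndex, Nat.odd_iff]; split_ifs <;> omega

theorem alphaIndex_mem_Icc {m j : ℕ} (h₁ : 1 ≤ j) (h₂ : j ≤ m) :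
    alphaIndex j ∈ Set.Icc 2 (2 * m + 1) := by
  simp only [alphaIndex, Nat.odd_iff, Set.mem_Icc]; split_ifs <;> omega

theorem betaIndex_mem_Icc {m j : ℕ} (h₁ : 1 ≤ j) (h₂ : j < m) :
    betaIndex j ∈ Set.Icc 2 (2 * m + 1) := by
  simp only [betaIndex, Nat.odd_iff, Set.mem_Icc]; split_ifs <;> omega

theorem prod_range_sdiepIndex {M : Type*} [CommMonoid M] {m : ℕ} (hm : Even m) (f : ℕ → M) :
    ∏ r ∈ range (2 * m), f (sdiepIndex m r) = ∏ j ∈ Icc 2 (2 * m + 1), f j := by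
  obtain ⟨k, rfl⟩ := hm
  -- `j = α_s` or `j = β_{s - 1}` with `s = j / 2`
  refine prod_nbij' (sdiepIndex (k + k))
    (fun j => if j = 2 then 0 else if j % 4 = 0 ∨ j % 4 = 3 then k + k + 1 - j / 2
      else 2 * (k + k) + 1 - j / 2) ?_ ?_ ?_ ?_ (fun _ _ => rfl) <;>
  · intro r hr
    simp only [mem_range, mem_Icc, sdiepIndex, alphaIndex, betaIndex, Nat.odd_iff] at hr ⊢
    split_ifs <;> omega

theorem sum_Icc_one_reflect {M : Type*} [AddCommMonoid M] (f : ℕ → M) (p : ℕ) :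
    ∑ j ∈ Icc 1 p, f j = ∑ t ∈ Ioc 0 p, f (p + 1 - t) := by
  refine sum_nbij' (fun j => p + 1 - j) (fun t => p + 1 - t) ?_ ?_ ?_ ?_ ?_ <;>
  · intro j hj
    simp only [mem_Icc, mem_Ioc] at hj ⊢
    first | omega | (congr 1; omega)

section Sdiep

variable {m : ℕ} {L : ℕ → ℝ}

theorem monotoneOn_comp_alphaIndex (hL : AntitoneOn L (Set.Icc 2 (2 * m + 1))) :
    MonotoneOn (fun t => L (alphaIndex (m + 1 - t))) (Ioc 0 m) := by
  intro s hs t ht hst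
  simp only [coe_Ioc, Set.mem_Ioc] at hs ht
  exact hL (alphaIndex_mem_Icc (by omega) (by omega)) (alphaIndex_mem_Icc (by omega) (by omega))
    (alphaIndex_le_alphaIndex (by omega))

theorem monotoneOn_comp_betaIndex (hL : AntitoneOn L (Set.Icc 2 (2 * m + 1))) :
    MonotoneOn (fun t => L (betaIndex (m - t))) (Ioc 0 (m - 1)) := by
  intro s hs t ht hst
  simp only [coe_Ioc, Set.mem_Ioc] at hs ht
  exact hL (betaIndex_mem_Icc (by omega) (by omega)) (betaIndex_mem_Icc (by omega) (by omega))
    (betaIndex_le_betaIndex (by omega))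

theorem comp_alphaIndex_le (hL : AntitoneOn L (Set.Icc 2 (2 * m + 1))) {t : ℕ} (h₁ : 1 ≤ t)
    (h₂ : t ≤ m) : L (alphaIndex (m + 1 - t)) ≤ L 2 :=
  have h := alphaIndex_mem_Icc (m := m) (j := m + 1 - t) (by omega) (by omega)
  hL ⟨le_rfl, by omega⟩ h h.1

theorem comp_betaIndex_le (hL : AntitoneOn L (Set.Icc 2 (2 * m + 1))) {t : ℕ} (h₁ : 1 ≤ t)
    (h₂ : t < m) : L (betaIndex (m - t)) ≤ L 2 :=
  have h := betaIndex_mem_Icc (m := m) (j := m - t) (by omega) (by omega)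
  hL ⟨le_rfl, by omega⟩ h h.1

theorem soulesEigenvalue_succ {r : ℕ} (hr : r < 2 * m) :
    soulesEigenvalue m (L 2) (fun t => L (alphaIndex (m + 1 - t))) (fun t => L (betaIndex (m - t)))
      (r + 1) = L (sdiepIndex m r) := by
  rcases (by omega : r = 0 ∨ (r ≠ 0 ∧ r ≤ m) ∨ m < r) with rfl | ⟨h₀, h⟩ | h
  · rfl
  · simp [soulesEigenvalue, sdiepIndex, h₀, h]
  · simp [soulesEigenvalue, sdiepIndex, show r ≠ 0 by omega, show ¬ r ≤ m by omega,
      show m - (r + 1 - m - 1) = 2 * m - r by omega]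

theorem prod_soulesEigenvalue (hm : Even m) :
    ∏ i : Fin (2 * m + 1), (X - C (soulesEigenvalue m (L 2) (fun t => L (alphaIndex (m + 1 - t)))
      (fun t => L (betaIndex (m - t))) i)) =
      (X - C 1) * ∏ j ∈ Icc 2 (2 * m + 1), (X - C (L j)) := by
  rw [Fin.prod_univ_eq_prod_range (fun i => X - C (soulesEigenvalue m (L 2) _ _ i)),
    prod_range_succ', ← prod_range_sdiepIndex hm, mul_comm]
  congr 1
  exact prod_congr rfl fun r hr => by rw [soulesEigenvalue_succ (mem_range.1 hr)]

theorem sum_alphaIndex_div_reflect :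
    ∑ j ∈ Icc 1 m, L (if Odd j then 2 * j + 1 else 2 * j) / (((m - j + 1) * (m - j + 2) : ℕ) : ℝ) =
      ∑ t ∈ Ioc 0 m, L (alphaIndex (m + 1 - t)) / ((t : ℝ) * (t + 1)) := by
  rw [sum_Icc_one_reflect]
  refine sum_congr rfl fun t ht => ?_
  have := mem_Ioc.1 ht
  rw [show m - (m + 1 - t) + 1 = t by omega, show m - (m + 1 - t) + 2 = t + 1 by omega]
  push_cast
  rfl

theorem sum_betaIndex_div_reflect :
    ∑ j ∈ Icc 1 (m - 1), L (if Odd j then 2 * j + 3 else 2 * j + 2) /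
        (((m - j) * (m - j + 1) : ℕ) : ℝ) =
      ∑ t ∈ Ioc 0 (m - 1), L (betaIndex (m - t)) / ((t : ℝ) * (t + 1)) := by
  rw [sum_Icc_one_reflect]
  refine sum_congr rfl fun t ht => ?_
  have := mem_Ioc.1 ht
  rw [show m - 1 + 1 - t = m - t by omega, show m - (m - t) = t by omega]
  push_cast
  rfl

end Sdiep

theorem sdiep_4k1_general (k n m : ℕ) (hk : 1 ≤ k) (hn : n = 4 * k + 1) (hm : m = 2 * k)
    (L : ℕ → ℝ) (hub : L 2 ≤ 1)
    (hdec : ∀ j, 2 ≤ j → j < n → L (j + 1) ≤ L j)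
    (hcond1 : 0 ≤ 1 / (n : ℝ) + ((n : ℝ) - (m : ℝ) - 1) / ((n : ℝ) * ((m : ℝ) + 1)) * L 2 +
        ∑ j ∈ Finset.Icc 1 m, L (if Odd j then 2 * j + 1 else 2 * j) /
          (((m - j + 1) * (m - j + 2) : ℕ) : ℝ))
    (hcond2 : 0 ≤ 1 / (n : ℝ) + ((n : ℝ) - (m : ℝ)) / ((n : ℝ) * (m : ℝ)) * L 2 +
        ∑ j ∈ Finset.Icc 1 (m - 1), L (if Odd j then 2 * j + 3 else 2 * j + 2) /
          (((m - j) * (m - j + 1) : ℕ) : ℝ)) :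
    ∃ D : Matrix (Fin n) (Fin n) ℝ, D.IsSymm ∧ DoublyStochastic D ∧
      D.charpoly = (X - C 1) * ∏ j ∈ Finset.Icc 2 n, (X - C (L j)) := by
  obtain rfl : n = 2 * m + 1 := by omega
  have hm₀ : 0 < m := by omega
  have hL : AntitoneOn L (Set.Icc 2 (2 * m + 1)) := antitoneOn_Icc_of_succ_le hdec
  rw [sum_alphaIndex_div_reflect] at hcond1
  rw [sum_betaIndex_div_reflect] at hcond2
  push_cast at hcond1 hcond2
  rw [show (2 * m + 1 - m - 1 : ℝ) = m by ring] at hcond1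
  rw [show (2 * m + 1 - m : ℝ) = m + 1 by ring] at hcond2
  have hD := soulesMatrix_nonneg hm₀ hub (monotoneOn_comp_alphaIndex hL)
    (monotoneOn_comp_betaIndex hL) (comp_alphaIndex_le hL hm₀ le_rfl)
    (comp_betaIndex_le hL (by omega) (by omega)) hcond1 hcond2
  refine ⟨_, soulesMatrix_isSymm, doublyStochastic_soulesMatrix hm₀ hD, ?_⟩
  rw [soulesMatrix_charpoly hm₀, prod_soulesEigenvalue ⟨k, by omega⟩]

/-- Case `n = 4k+1`, `m = 2k`: with `α_j = 2j+1` for `j` odd and `2j` for `j` even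
(the increasing enumeration `3, 4, 7, 8, …, n-2, n-1`), and `β_j = 2j+3` for `j` odd and
`2j+2` for `j` even (the increasing enumeration `5, 6, 9, 10, …, n-4, n-3, n`), if both
`1/n + ((n-m-1)/(n(m+1)))λ₂ + ∑_{j=1}^{m} λ_{α_j}/((m-j+1)(m-j+2)) ≥ 0` and
`1/n + ((n-m)/(nm))λ₂ + ∑_{j=1}^{m-1} λ_{β_j}/((m-j)(m-j+1)) ≥ 0`, then `1, λ₂, …, λₙ`
is the spectrum of an `n × n` symmetric doubly stochastic matrix. -/
theorem sdiep_4k1 (k n m : ℕ) (hk : 1 ≤ k) (hn : n = 4 * k + 1) (hm : m = 2 * k)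
    (L : ℕ → ℝ) (hub : L 2 ≤ 1)
    (hdec : ∀ j, 2 ≤ j → j < n → L (j + 1) ≤ L j)
    (hlb : -1 ≤ L n)
    (htr : 0 ≤ 1 + ∑ j ∈ Finset.Icc 2 n, L j)
    (hcond1 : 0 ≤ 1 / (n : ℝ) + ((n : ℝ) - (m : ℝ) - 1) / ((n : ℝ) * ((m : ℝ) + 1)) * L 2 +
        ∑ j ∈ Finset.Icc 1 m, L (if Odd j then 2 * j + 1 else 2 * j) /
          (((m - j + 1) * (m - j + 2) : ℕ) : ℝ))
    (hcond2 : 0 ≤ 1 / (n : ℝ) + ((n : ℝ) - (m : ℝ)) / ((n : ℝ) * (m : ℝ)) * L 2 +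
        ∑ j ∈ Finset.Icc 1 (m - 1), L (if Odd j then 2 * j + 3 else 2 * j + 2) /
          (((m - j) * (m - j + 1) : ℕ) : ℝ)) :
    ∃ D : Matrix (Fin n) (Fin n) ℝ, D.IsSymm ∧ DoublyStochastic D ∧
      D.charpoly = (X - C 1) * ∏ j ∈ Finset.Icc 2 n, (X - C (L j)) :=
  sdiep_4k1_general k n m hk hn hm L hub hdec hcond1 hcond2
end

section
/- Let k ≥ 1, n = 4k+2, m = 2k, and let 1 ≥ λ₂ ≥ ... ≥ λₙ ≥ −1 be real numbers with 1 + λ₂ + ... + λₙ ≥ 0. Let α₁ < α₂ < ... < α_m be the increasing enumeration of {3} ∪ {j : 6 ≤ j ≤ n, j ≡ 2 or 3 (mod 4)} (namely 3, 6, 7, 10, 11, ..., n−4, n−3, n), and let β₁ < ... < β_m be the increasing enumeration of {j : 4 ≤ j ≤ n−1, j ≡ 0 or 1 (mod 4)} (namely 4, 5, 8, 9, ..., n−2, n−1). If both 1/n + ((n−m−1)/(n(m+1)))·λ₂ + Σ_{j=1}^{m} λ_{α_j}/((m−j+1)(m−j+2)) ≥ 0 and 1/n + ((n−m−1)/(n(m+1)))·λ₂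 + Σ_{j=1}^{m} λ_{β_j}/((m−j+1)(m−j+2)) ≥ 0 hold, then there exists an n×n symmetric doubly stochastic matrix whose eigenvalues, counted with algebraic multiplicity, are 1, λ₂, ..., λₙ. -/
open Matrix Polynomial

/-!
Write `n = 2(m+1)` and split the coordinates into two blocks of size `m + 1`. The matrix is
`P diag(μ) Pᵀ` for the orthonormal basis `P` made of `1/√n` times the all-ones vector, `1/√n`
times the vector that is `1` on the first block and `-1` on the second, and, on each block, the
Helmert vectors `(1, …, 1, -t, 0, …, 0) / √(t(t+1))`, `1 ≤ t ≤ m`. The first two get the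
eigenvalues `1` and `λ₂`; the `t`-th Helmert vectors of the two blocks get `λ_{α_{m+1-t}}` and
`λ_{β_{m+1-t}}`, so that the eigenvalue increases with the support of the vector.

Such a matrix is symmetric with row sums `1`, and its off-diagonal blocks are the constant
`(1 - λ₂)/n`. In a diagonal block with eigenvalues `ν_1 ≤ … ≤ ν_m` on the Helmert vectors, the
entry at `a ≤ b` is `(1 + λ₂)/n + ∑_{t > b} ν_t/(t(t+1))` plus `ν_b b/(b+1)` if `a = b`, minus
`ν_b/(b+1)` if `a < b`. As `∑_{t ≤ b} ν_t/(t(t+1)) ≤ ν_b b/(b+1)` by monotonicity, this is at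
least the weighted sum `(1 + λ₂)/n + ∑_t ν_t/(t(t+1))` of the hypothesis, except when `a < b`
and `ν_b > 0`; then `∑_{t > b} ν_t/(t(t+1)) ≥ ν_b (1/(b+1) - 1/(m+1))` and `ν_b ≤ λ₂ ≤ 1`
suffice.
-/

namespace Soules
open Finset

@[to_additive]
lemma prod_fin_succ_eq_prod_Ioc {M : Type*} [CommMonoid M] (p : ℕ) (f : ℕ → M) :
    ∏ t : Fin p, f (t + 1) = ∏ t ∈ Ioc 0 p, f t := by
  rw [Fin.prod_univ_eq_prod_range (fun t => f (t + 1)), range_eq_Ico, prod_Ico_add',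
    Finset.Ico_add_one_add_one_eq_Ioc]

@[to_additive]
lemma prod_Icc_reflect {M : Type*} [CommMonoid M] (f : ℕ → M) (m : ℕ) :
    ∏ j ∈ Icc 1 m, f (m + 1 - j) = ∏ j ∈ Icc 1 m, f j :=
  prod_nbij' (m + 1 - ·) (m + 1 - ·) (by simp; omega) (by simp; omega) (by simp; omega)
    (by simp; omega) fun _ _ => rfl

lemma prod_Icc_pairs {M : Type*} [CommMonoid M] (f : ℕ → M) (m : ℕ) :
    ∏ j ∈ Icc 1 m, (f (2 * j + 1) * f (2 * j + 2)) = ∏ j ∈ Ioc 2 (2 * m + 2), f j := by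
  induction m with
  | zero => simp
  | succ m ih =>
    rw [prod_Icc_succ_top (by omega), ih, show 2 * (m + 1) + 2 = 2 * m + 2 + 1 + 1 by ring,
      prod_Ioc_succ_top (show 2 ≤ 2 * m + 2 + 1 by omega),
      prod_Ioc_succ_top (show 2 ≤ 2 * m + 2 by omega), mul_assoc]
    rfl

lemma charpoly_mul_diagonal_mul_transpose {ι R : Type*} [Fintype ι] [DecidableEq ι] [CommRing R]
    {P : Matrix ι ι R} (hP : Pᵀ * P = 1) (d : ι → R) :
    (P * diagonal d * Pᵀ).charpoly = ∏ i, (X - C (d i)) := by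
  rw [charpoly_mul_comm, ← mul_assoc, hP, one_mul, charpoly_diagonal]

lemma doublyStochastic_reindex {ι : Type*} [Fintype ι] {n : ℕ} (e : ι ≃ Fin n)
    {M : Matrix ι ι ℝ} (hM : M.IsSymm) (h₀ : ∀ i j, 0 ≤ M i j) (h₁ : ∀ i, ∑ j, M i j = 1) :
    DoublyStochastic (reindex e e M) := by
  refine ⟨fun i j => h₀ _ _, fun i => ?_, fun j => ?_⟩
  · simpa [reindex_apply] using (e.symm.sum_comp (M (e.symm i))).trans (h₁ _)
  · simpa [reindex_apply, hM.apply (e.symm j)] using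
      (e.symm.sum_comp (M (e.symm j))).trans (h₁ _)

noncomputable def helmertVec (t j : ℕ) : ℝ :=
  if j < t then 1 / √(t * (t + 1)) else if j = t then -(t / √(t * (t + 1))) else 0

lemma helmertVec_of_lt {t j : ℕ} (h : j < t) : helmertVec t j = 1 / √(t * (t + 1)) :=
  if_pos h

lemma helmertVec_self (t : ℕ) : helmertVec t t = -(t / √(t * (t + 1))) := by
  simp [helmertVec]

lemma helmertVec_of_gt {t j : ℕ} (h : t < j) : helmertVec t j = 0 := by
  simp [helmertVec, h.not_gt, h.ne']

lemma sqrt_mul_succ_mul_self (t : ℕ) : √(t * (t + 1)) * √(t * (t + 1)) = (t : ℝ) * (t + 1) :=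
  Real.mul_self_sqrt (by positivity)

lemma helmertVec_mul_of_lt {t a b : ℕ} (ha : a < t) (hb : b < t) :
    helmertVec t a * helmertVec t b = 1 / (t * (t + 1)) := by
  rw [helmertVec_of_lt ha, helmertVec_of_lt hb, div_mul_div_comm, one_mul,
    sqrt_mul_succ_mul_self]

lemma helmertVec_mul_self_of_lt {t a : ℕ} (ha : a < t) :
    helmertVec t a * helmertVec t t = -(1 / (t + 1)) := by
  have ht : (0 : ℝ) < t := by exact_mod_cast (Nat.zero_le a).trans_lt ha
  rw [helmertVec_of_lt ha, helmertVec_self, mul_neg, div_mul_div_comm, one_mul,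
    sqrt_mul_succ_mul_self]
  field_simp

lemma helmertVec_self_mul_self (t : ℕ) :
    helmertVec t t * helmertVec t t = t / (t + 1) := by
  rcases Nat.eq_zero_or_pos t with rfl | ht
  · simp [helmertVec]
  have ht : (0 : ℝ) < t := by exact_mod_cast ht
  rw [helmertVec_self, neg_mul_neg, div_mul_div_comm, sqrt_mul_succ_mul_self]
  field_simp

lemma sum_helmertVec_eq_sum_range_succ {t p : ℕ} (htp : t ≤ p) (f : ℕ → ℝ) :
    ∑ j ∈ range (p + 1), f j * helmertVec t j = ∑ j ∈ range (t + 1), f j * helmertVec t j :=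
  (sum_subset (range_subset_range.2 (by omega)) fun j _ hj => by
    rw [helmertVec_of_gt (by simpa using hj), mul_zero]).symm

lemma sum_helmertVec {t p : ℕ} (htp : t ≤ p) :
    ∑ j ∈ range (p + 1), helmertVec t j = 0 := by
  have := sum_helmertVec_eq_sum_range_succ htp fun _ => 1
  simp only [one_mul] at this
  rw [this, sum_range_succ, sum_congr rfl fun j hj => helmertVec_of_lt (mem_range.1 hj),
    sum_const, card_range, nsmul_eq_mul, helmertVec_self]
  ring

lemma sum_helmertVec_mul_self {t p : ℕ} (ht : 1 ≤ t) (htp : t ≤ p) :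
    ∑ j ∈ range (p + 1), helmertVec t j * helmertVec t j = 1 := by
  have ht' : (0 : ℝ) < t := by exact_mod_cast ht
  rw [sum_helmertVec_eq_sum_range_succ htp, sum_range_succ,
    sum_congr rfl fun j hj => helmertVec_mul_of_lt (mem_range.1 hj) (mem_range.1 hj),
    sum_const, card_range, nsmul_eq_mul, helmertVec_self_mul_self]
  field_simp
  ring

lemma sum_helmertVec_mul_of_lt {s t p : ℕ} (hst : s < t) (htp : t ≤ p) :
    ∑ j ∈ range (p + 1), helmertVec s j * helmertVec t j = 0 := by
  have hconst : ∀ j ∈ range (p + 1), helmertVec s j * helmertVec t j =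
      helmertVec s j * (1 / √(t * (t + 1))) := fun j _ => by
    rcases le_or_gt j s with hj | hj
    · rw [helmertVec_of_lt (hj.trans_lt hst)]
    · rw [helmertVec_of_gt hj, zero_mul, zero_mul]
  rw [sum_congr rfl hconst, ← sum_mul, sum_helmertVec (hst.le.trans htp), zero_mul]

lemma sum_helmertVec_mul {s t p : ℕ} (hs : 1 ≤ s) (hsp : s ≤ p) (ht : 1 ≤ t) (htp : t ≤ p) :
    ∑ j ∈ range (p + 1), helmertVec s j * helmertVec t j = if s = t then 1 else 0 := by
  rcases lt_trichotomy s t with hst | rfl | hst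
  · rw [if_neg hst.ne, sum_helmertVec_mul_of_lt hst htp]
  · rw [if_pos rfl, sum_helmertVec_mul_self hs hsp]
  · simp_rw [mul_comm (helmertVec s _)]
    rw [if_neg hst.ne', sum_helmertVec_mul_of_lt hst hsp]

lemma sum_Ioc_one_div_mul_succ {a c : ℕ} (hac : a ≤ c) :
    ∑ t ∈ Ioc a c, (1 : ℝ) / (t * (t + 1)) = 1 / (a + 1) - 1 / (c + 1) := by
  induction c, hac using Nat.le_induction with
  | base => simp
  | succ c hac ih =>
    rw [sum_Ioc_succ_top (by omega), ih]
    push_cast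
    field_simp
    ring

lemma sum_Ioc_div_le {a c : ℕ} (hac : a ≤ c) {ν : ℕ → ℝ} {C : ℝ}
    (hν : ∀ t ∈ Ioc a c, ν t ≤ C) :
    ∑ t ∈ Ioc a c, ν t / (t * (t + 1)) ≤ C * (1 / (a + 1) - 1 / (c + 1)) := by
  rw [← sum_Ioc_one_div_mul_succ hac, mul_sum]
  refine sum_le_sum fun t ht => ?_
  rw [mul_one_div]
  exact div_le_div_of_nonneg_right (hν t ht) (by positivity)

lemma le_sum_Ioc_div {a c : ℕ} (hac : a ≤ c) {ν : ℕ → ℝ} {C : ℝ}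
    (hν : ∀ t ∈ Ioc a c, C ≤ ν t) :
    C * (1 / (a + 1) - 1 / (c + 1)) ≤ ∑ t ∈ Ioc a c, ν t / (t * (t + 1)) := by
  rw [← sum_Ioc_one_div_mul_succ hac, mul_sum]
  refine sum_le_sum fun t ht => ?_
  rw [mul_one_div]
  exact div_le_div_of_nonneg_right (hν t ht) (by positivity)

lemma sum_mul_helmertVec_mul {m a b : ℕ} (hab : a ≤ b) (hbm : b ≤ m) (ν : ℕ → ℝ) :
    ∑ t ∈ Ioc 0 m, ν t * (helmertVec t a * helmertVec t b) =
      ν b * (helmertVec b a * helmertVec b b) + ∑ t ∈ Ioc b m, ν t / (t * (t + 1)) := by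
  rw [← sum_Ioc_consecutive _ (Nat.zero_le b) hbm]
  congr 1
  · refine sum_eq_single b (fun t ht htb => ?_) fun hb => ?_
    · rw [helmertVec_of_gt (lt_of_le_of_ne (mem_Ioc.1 ht).2 htb), mul_zero, mul_zero]
    · obtain rfl : b = 0 := by simpa using hb
      obtain rfl : a = 0 := by omega
      simp [helmertVec]
  · refine sum_congr rfl fun t ht => ?_
    have ht := mem_Ioc.1 ht
    rw [helmertVec_mul_of_lt (by omega) (by omega), mul_one_div]

lemma helmertForm_nonneg {m : ℕ} {c : ℝ} {ν : ℕ → ℝ} (hν : MonotoneOn ν (Set.Icc 1 m))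
    (hνc : ∀ t ∈ Set.Icc 1 m, ν t ≤ c)
    (hsum : 0 ≤ c / (m + 1) + ∑ t ∈ Ioc 0 m, ν t / (t * (t + 1))) {a b : ℕ} (ha : a ≤ m)
    (hb : b ≤ m) : 0 ≤ c / (m + 1) + ∑ t ∈ Ioc 0 m, ν t * (helmertVec t a * helmertVec t b) := by
  wlog hab : a ≤ b generalizing a b
  · simpa only [mul_comm (helmertVec _ a)] using this hb ha (by omega)
  have hmono : ∀ s ∈ Ioc 0 m, ∀ t ∈ Ioc 0 m, s ≤ t → ν s ≤ ν t := fun s hs t ht hst => by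
    simp only [mem_Ioc] at hs ht
    exact hν ⟨hs.1, hs.2⟩ ⟨ht.1, ht.2⟩ hst
  have hlow : ∑ t ∈ Ioc 0 b, ν t / (t * (t + 1)) ≤ ν b * (1 - 1 / (b + 1)) := by
    rcases Nat.eq_zero_or_pos b with rfl | hb0
    · simp
    simpa using sum_Ioc_div_le (Nat.zero_le b) fun t ht =>
      hmono t (Ioc_subset_Ioc_right hb ht) b (by simp; omega) (mem_Ioc.1 ht).2
  rw [← sum_Ioc_consecutive _ (Nat.zero_le b) hb] at hsum
  rw [sum_mul_helmertVec_mul hab hb]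
  rcases hab.eq_or_lt with rfl | hab
  · rw [helmertVec_self_mul_self]
    have : ν a * (1 - 1 / (a + 1)) = ν a * (a / (a + 1)) := by field_simp; ring
    linarith
  rw [helmertVec_mul_self_of_lt hab]
  rcases le_or_gt (ν b) 0 with hνb | hνb
  · have : ν b * (1 - 1 / (b + 1)) = ν b + ν b * -(1 / (b + 1)) := by ring
    linarith
  · have hhigh : ν b * (1 / (b + 1) - 1 / (m + 1)) ≤ ∑ t ∈ Ioc b m, ν t / (t * (t + 1)) :=
      le_sum_Ioc_div hb fun t ht => hmono b (by simp; omega) t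
        (Ioc_subset_Ioc_left (Nat.zero_le b) ht) (mem_Ioc.1 ht).1.le
    have hc : ν b / (m + 1) ≤ c / (m + 1) :=
      div_le_div_of_nonneg_right (hνc b ⟨by omega, hb⟩) (by positivity)
    have : ν b * (1 / (b + 1) - 1 / (m + 1)) = -(ν b * -(1 / (b + 1))) - ν b / (m + 1) := by
      ring
    linarith

noncomputable def helmert (p : ℕ) : Matrix (Fin (p + 1)) (Fin (p + 1)) ℝ :=
  of fun i t => if t = 0 then 1 / √(p + 1) else helmertVec t i

@[simp] lemma helmert_zero (p : ℕ) (i : Fin (p + 1)) : helmert p i 0 = 1 / √(p + 1) := by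
  simp [helmert]

@[simp] lemma helmert_succ (p : ℕ) (i : Fin (p + 1)) (t : Fin p) :
    helmert p i t.succ = helmertVec (t + 1) i := by
  simp [helmert]

lemma helmert_transpose_mul_self (p : ℕ) : (helmert p)ᵀ * helmert p = 1 := by
  have hp : (0 : ℝ) < p + 1 := by positivity
  ext s t
  rw [mul_apply]
  simp only [transpose_apply]
  induction s using Fin.cases <;> induction t using Fin.cases
  · simp only [helmert_zero, sum_const, card_univ, Fintype.card_fin, nsmul_eq_mul, one_apply_eq]
    rw [div_mul_div_comm, one_mul, Real.mul_self_sqrt hp.le]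
    push_cast
    field_simp
  · rename_i t
    simp only [helmert_zero, helmert_succ, one_apply_ne (Fin.succ_ne_zero t).symm]
    rw [← mul_sum, Fin.sum_univ_eq_sum_range (fun i => helmertVec (t + 1) i),
      sum_helmertVec (by omega), mul_zero]
  · rename_i s
    simp only [helmert_zero, helmert_succ, one_apply_ne (Fin.succ_ne_zero s)]
    rw [← sum_mul, Fin.sum_univ_eq_sum_range (fun i => helmertVec (s + 1) i),
      sum_helmertVec (by omega), zero_mul]
  · rename_i s t
    simp only [helmert_succ, one_apply, Fin.succ_inj]
    rw [Fin.sum_univ_eq_sum_range (fun i => helmertVec (s + 1) i * helmertVec (t + 1) i),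
      sum_helmertVec_mul (by omega) (by omega) (by omega) (by omega)]
    simp [Fin.val_inj]

lemma helmert_mul_diagonal_mul_transpose_apply (p : ℕ) (d : Fin (p + 1) → ℝ)
    (i j : Fin (p + 1)) :
    (helmert p * diagonal d * (helmert p)ᵀ) i j =
      d 0 / (p + 1) + ∑ t : Fin p, d t.succ * (helmertVec (t + 1) i * helmertVec (t + 1) j) := by
  have hp : (0 : ℝ) ≤ p + 1 := by positivity
  rw [mul_apply]
  simp only [mul_diagonal, transpose_apply, Fin.sum_univ_succ, helmert_zero, helmert_succ]
  congr 1
  · rw [mul_comm, ← mul_assoc, div_mul_div_comm, one_mul, Real.mul_self_sqrt hp,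
      one_div_mul_eq_div]
  · exact sum_congr rfl fun t _ => by ring

lemma helmert_mul_diagonal_update_mul_transpose_apply (p : ℕ) (ν : ℕ → ℝ) (a : ℝ)
    (i j : Fin (p + 1)) :
    (helmert p * diagonal (Function.update (fun t : Fin (p + 1) => ν t) 0 a) *
      (helmert p)ᵀ) i j = a / (p + 1) + ∑ t ∈ Ioc 0 p, ν t * (helmertVec t i * helmertVec t j) := by
  simp [helmert_mul_diagonal_mul_transpose_apply,
    ← sum_fin_succ_eq_sum_Ioc p fun t => ν t * (helmertVec t i * helmertVec t j)]

lemma helmert_mul_diagonal_single_mul_transpose_apply (p : ℕ) (b : ℝ) (i j : Fin (p + 1)) :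
    (helmert p * diagonal (Pi.single (0 : Fin (p + 1)) b) * (helmert p)ᵀ) i j = b / (p + 1) := by
  simp [helmert_mul_diagonal_mul_transpose_apply]

lemma sum_helmert_mul_diagonal_update_mul_transpose (p : ℕ) (ν : ℕ → ℝ) (a : ℝ)
    (i : Fin (p + 1)) :
    ∑ j, (helmert p * diagonal (Function.update (fun t : Fin (p + 1) => ν t) 0 a) *
      (helmert p)ᵀ) i j = a := by
  have hp : (p : ℝ) + 1 ≠ 0 := by positivity
  have hzero : ∀ t ∈ Ioc 0 p, ∑ j : Fin (p + 1), ν t * (helmertVec t i * helmertVec t j) = 0 :=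
    fun t ht => by
      rw [← mul_sum, ← mul_sum, Fin.sum_univ_eq_sum_range (helmertVec t),
        sum_helmertVec (mem_Ioc.1 ht).2, mul_zero, mul_zero]
  simp only [helmert_mul_diagonal_update_mul_transpose_apply, sum_add_distrib, sum_const,
    card_univ, Fintype.card_fin, nsmul_eq_mul]
  rw [sum_comm, sum_congr rfl hzero, sum_const_zero, add_zero]
  push_cast
  field_simp

/-- Rotates the two block-constant unit vectors into the normalised all-ones vector and the
normalised vector that is `1` on the first block and `-1` on the second. -/
noncomputable def constRotation (p : ℕ) :
    Matrix (Fin (p + 1) ⊕ Fin (p + 1)) (Fin (p + 1) ⊕ Fin (p + 1)) ℝ :=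
  fromBlocks (diagonal (Function.update 1 0 (√2)⁻¹)) (diagonal (Pi.single 0 (√2)⁻¹))
    (diagonal (Pi.single 0 (√2)⁻¹)) (diagonal (Function.update 1 0 (-(√2)⁻¹)))

lemma inv_sqrt_two_mul_self : (√2)⁻¹ * (√2)⁻¹ = (2 : ℝ)⁻¹ := by
  rw [← mul_inv, Real.mul_self_sqrt zero_le_two]

lemma constRotation_transpose_mul_self (p : ℕ) : (constRotation p)ᵀ * constRotation p = 1 := by
  rw [← fromBlocks_one, ← diagonal_one, ← diagonal_zero]
  simp only [constRotation, fromBlocks_transpose, diagonal_transpose, fromBlocks_multiply,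
    diagonal_mul_diagonal, diagonal_add]
  congr 1 <;> congr 1 <;> funext i <;> by_cases hi : i = 0 <;>
    simp [hi, inv_sqrt_two_mul_self] <;> norm_num

lemma constRotation_mul_diagonal_mul_transpose (p : ℕ) (d d' : Fin (p + 1) → ℝ) :
    constRotation p * diagonal (Sum.elim d d') * (constRotation p)ᵀ =
      fromBlocks (diagonal (Function.update d 0 ((d 0 + d' 0) / 2)))
        (diagonal (Pi.single 0 ((d 0 - d' 0) / 2))) (diagonal (Pi.single 0 ((d 0 - d' 0) / 2)))
        (diagonal (Function.update d' 0 ((d 0 + d' 0) / 2))) := by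
  rw [← fromBlocks_diagonal]
  simp only [constRotation, fromBlocks_transpose, diagonal_transpose, fromBlocks_multiply,
    diagonal_mul_diagonal, mul_zero, add_zero, zero_add, diagonal_add]
  congr 1 <;> congr 1 <;> funext i <;> by_cases hi : i = 0 <;>
    simp [hi, mul_comm _ (√2)⁻¹, ← mul_assoc, inv_sqrt_two_mul_self] <;> ring

noncomputable def soulesBasis (p : ℕ) :
    Matrix (Fin (p + 1) ⊕ Fin (p + 1)) (Fin (p + 1) ⊕ Fin (p + 1)) ℝ :=
  fromBlocks (helmert p) 0 0 (helmert p) * constRotation p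

lemma soulesBasis_transpose_mul_self (p : ℕ) : (soulesBasis p)ᵀ * soulesBasis p = 1 := by
  have hB : (fromBlocks (helmert p) 0 0 (helmert p))ᵀ * fromBlocks (helmert p) 0 0 (helmert p) =
      1 := by
    simp [fromBlocks_transpose, fromBlocks_multiply, helmert_transpose_mul_self]
  rw [soulesBasis, transpose_mul, mul_assoc, ← mul_assoc _ _ (constRotation p), hB, one_mul,
    constRotation_transpose_mul_self]

noncomputable def soulesBlock (p : ℕ) (ν ν' : ℕ → ℝ) :
    Matrix (Fin (p + 1) ⊕ Fin (p + 1)) (Fin (p + 1) ⊕ Fin (p + 1)) ℝ :=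
  soulesBasis p * diagonal (Sum.elim (fun t : Fin (p + 1) => ν t) fun t : Fin (p + 1) => ν' t) *
    (soulesBasis p)ᵀ

lemma soulesBlock_isSymm (p : ℕ) (ν ν' : ℕ → ℝ) : (soulesBlock p ν ν').IsSymm := by
  simp [soulesBlock, IsSymm, transpose_mul, mul_assoc]

lemma soulesBlock_charpoly (p : ℕ) (ν ν' : ℕ → ℝ) :
    (soulesBlock p ν ν').charpoly =
      (∏ t : Fin (p + 1), (X - C (ν t))) * ∏ t : Fin (p + 1), (X - C (ν' t)) := by
  rw [soulesBlock, charpoly_mul_diagonal_mul_transpose (soulesBasis_transpose_mul_self p),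
    Fintype.prod_sum_type]
  rfl

lemma soulesBlock_eq_fromBlocks (p : ℕ) (ν ν' : ℕ → ℝ) :
    soulesBlock p ν ν' =
      fromBlocks
        (helmert p * diagonal (Function.update (fun t : Fin (p + 1) => ν t) 0 ((ν 0 + ν' 0) / 2)) *
          (helmert p)ᵀ)
        (helmert p * diagonal (Pi.single 0 ((ν 0 - ν' 0) / 2)) * (helmert p)ᵀ)
        (helmert p * diagonal (Pi.single 0 ((ν 0 - ν' 0) / 2)) * (helmert p)ᵀ)
        (helmert p *
          diagonal (Function.update (fun t : Fin (p + 1) => ν' t) 0 ((ν 0 + ν' 0) / 2)) *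
          (helmert p)ᵀ) := by
  simp only [soulesBlock, soulesBasis, transpose_mul, ← mul_assoc]
  rw [mul_assoc _ (constRotation p), mul_assoc _ _ (constRotation p)ᵀ,
    constRotation_mul_diagonal_mul_transpose]
  simp [fromBlocks_transpose, fromBlocks_multiply, mul_assoc]

lemma sum_soulesBlock_apply (p : ℕ) (ν ν' : ℕ → ℝ) (i : Fin (p + 1) ⊕ Fin (p + 1)) :
    ∑ j, soulesBlock p ν ν' i j = ν 0 := by
  have hp : (p : ℝ) + 1 ≠ 0 := by positivity
  rw [soulesBlock_eq_fromBlocks, Fintype.sum_sum_type]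
  rcases i with i | i <;>
  simp only [fromBlocks_apply₁₁, fromBlocks_apply₁₂, fromBlocks_apply₂₁, fromBlocks_apply₂₂,
    sum_helmert_mul_diagonal_update_mul_transpose,
    helmert_mul_diagonal_single_mul_transpose_apply, sum_const, card_univ, Fintype.card_fin,
    nsmul_eq_mul] <;>
  push_cast <;> field_simp <;> ring

theorem soulesBlock_nonneg {p : ℕ} {ν ν' : ℕ → ℝ} (h₀ : ν' 0 ≤ ν 0)
    (hν : MonotoneOn ν (Set.Icc 1 p)) (hν' : MonotoneOn ν' (Set.Icc 1 p))
    (hνle : ∀ t ∈ Set.Icc 1 p, ν t ≤ (ν 0 + ν' 0) / 2)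
    (hν'le : ∀ t ∈ Set.Icc 1 p, ν' t ≤ (ν 0 + ν' 0) / 2)
    (hνsum : 0 ≤ (ν 0 + ν' 0) / 2 / (p + 1) + ∑ t ∈ Ioc 0 p, ν t / (t * (t + 1)))
    (hν'sum : 0 ≤ (ν 0 + ν' 0) / 2 / (p + 1) + ∑ t ∈ Ioc 0 p, ν' t / (t * (t + 1)))
    (i j : Fin (p + 1) ⊕ Fin (p + 1)) : 0 ≤ soulesBlock p ν ν' i j := by
  have hoff : 0 ≤ (ν 0 - ν' 0) / 2 / (p + 1) := by
    apply div_nonneg <;> [linarith; positivity]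
  rw [soulesBlock_eq_fromBlocks]
  rcases i with i | i <;> rcases j with j | j <;>
  simp only [fromBlocks_apply₁₁, fromBlocks_apply₁₂, fromBlocks_apply₂₁, fromBlocks_apply₂₂,
    helmert_mul_diagonal_update_mul_transpose_apply,
    helmert_mul_diagonal_single_mul_transpose_apply, hoff]
  · exact helmertForm_nonneg hν hνle hνsum (Nat.lt_succ_iff.1 i.2) (Nat.lt_succ_iff.1 j.2)
  · exact helmertForm_nonneg hν' hν'le hν'sum (Nat.lt_succ_iff.1 i.2) (Nat.lt_succ_iff.1 j.2)

def alphaIdx (j : ℕ) : ℕ := if j = 1 then 3 else if Odd j then 2 * j + 1 else 2 * j + 2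

def betaIdx (j : ℕ) : ℕ := if Odd j then 2 * j + 2 else 2 * j + 1

lemma alphaIdx_mem {j : ℕ} (hj : 1 ≤ j) : alphaIdx j ∈ Set.Icc 3 (2 * j + 2) := by
  unfold alphaIdx; constructor <;> split_ifs <;> omega

lemma betaIdx_mem (j : ℕ) : betaIdx j ∈ Set.Icc (2 * j + 1) (2 * j + 2) := by
  unfold betaIdx; constructor <;> split_ifs <;> omega

lemma alphaIdx_mapsTo (m : ℕ) : Set.MapsTo alphaIdx (Set.Icc 1 m) (Set.Icc 2 (2 * m + 2)) :=
  fun j ⟨hj₁, hj₂⟩ => by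
    obtain ⟨h₁, h₂⟩ := alphaIdx_mem hj₁
    exact ⟨by omega, by omega⟩

lemma betaIdx_mapsTo (m : ℕ) : Set.MapsTo betaIdx (Set.Icc 1 m) (Set.Icc 2 (2 * m + 2)) :=
  fun j ⟨hj₁, hj₂⟩ => by
    obtain ⟨h₁, h₂⟩ := betaIdx_mem j
    exact ⟨by omega, by omega⟩

lemma alphaIdx_monotoneOn : MonotoneOn alphaIdx (Set.Ici 1) := by
  intro s hs t ht hst
  rcases hst.eq_or_lt with rfl | hst
  · rfl
  have h₁ := (alphaIdx_mem (Set.mem_Ici.1 hs)).2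
  have h₂ : 2 * t + 1 ≤ alphaIdx t := by unfold alphaIdx; split_ifs <;> omega
  omega

lemma betaIdx_monotone : Monotone betaIdx := by
  intro s t hst
  rcases hst.eq_or_lt with rfl | hst
  · rfl
  have h₁ := (betaIdx_mem s).2
  have h₂ := (betaIdx_mem t).1
  omega

lemma alphaIdx_betaIdx_cases (j : ℕ) :
    alphaIdx j = 2 * j + 1 ∧ betaIdx j = 2 * j + 2 ∨
      alphaIdx j = 2 * j + 2 ∧ betaIdx j = 2 * j + 1 := by
  unfold alphaIdx betaIdx
  split_ifs with h₁ h₂ <;> subst_vars <;> simp_all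

lemma prod_alphaIdx_mul_prod_betaIdx {M : Type*} [CommMonoid M] (f : ℕ → M) (m : ℕ) :
    (∏ j ∈ Icc 1 m, f (alphaIdx j)) * ∏ j ∈ Icc 1 m, f (betaIdx j) =
      ∏ j ∈ Ioc 2 (2 * m + 2), f j := by
  rw [← prod_Icc_pairs, ← prod_mul_distrib]
  refine prod_congr rfl fun j _ => ?_
  rcases alphaIdx_betaIdx_cases j with ⟨hα, hβ⟩ | ⟨hα, hβ⟩
  · rw [hα, hβ]
  · rw [hα, hβ, mul_comm]

/-- Indexed in reverse, so that for increasing `σ` and decreasing `L` the eigenvalue grows with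
the support of the Helmert vector it is attached to. -/
def blockSpectrum (c : ℝ) (L : ℕ → ℝ) (σ : ℕ → ℕ) (m t : ℕ) : ℝ :=
  if t = 0 then c else L (σ (m + 1 - t))

@[simp] lemma blockSpectrum_zero (c : ℝ) (L : ℕ → ℝ) (σ : ℕ → ℕ) (m : ℕ) :
    blockSpectrum c L σ m 0 = c :=
  if_pos rfl

lemma blockSpectrum_of_ne_zero (c : ℝ) (L : ℕ → ℝ) (σ : ℕ → ℕ) (m : ℕ) {t : ℕ} (ht : t ≠ 0) :
    blockSpectrum c L σ m t = L (σ (m + 1 - t)) :=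
  if_neg ht

section
variable {c : ℝ} {L : ℕ → ℝ} {σ : ℕ → ℕ} {m N : ℕ}

lemma blockSpectrum_monotoneOn (hL : AntitoneOn L (Set.Icc 2 N))
    (hσ : MonotoneOn σ (Set.Icc 1 m)) (hσN : Set.MapsTo σ (Set.Icc 1 m) (Set.Icc 2 N)) :
    MonotoneOn (blockSpectrum c L σ m) (Set.Icc 1 m) := by
  rintro s ⟨hs₁, hs₂⟩ t ⟨ht₁, ht₂⟩ hst
  have hs' : m + 1 - s ∈ Set.Icc 1 m := ⟨by omega, by omega⟩
  have ht' : m + 1 - t ∈ Set.Icc 1 m := ⟨by omega, by omega⟩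
  rw [blockSpectrum_of_ne_zero _ _ _ _ (by omega), blockSpectrum_of_ne_zero _ _ _ _ (by omega)]
  exact hL (hσN ht') (hσN hs') (hσ ht' hs' (by omega))

lemma blockSpectrum_le (hL : AntitoneOn L (Set.Icc 2 N))
    (hσN : Set.MapsTo σ (Set.Icc 1 m) (Set.Icc 2 N)) :
    ∀ t ∈ Set.Icc 1 m, blockSpectrum c L σ m t ≤ L 2 := by
  rintro t ⟨ht₁, ht₂⟩
  have hσt := hσN (show m + 1 - t ∈ Set.Icc 1 m from ⟨by omega, by omega⟩)
  rw [blockSpectrum_of_ne_zero _ _ _ _ (by omega)]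
  exact hL ⟨le_rfl, hσt.1.trans hσt.2⟩ hσt hσt.1

lemma sum_blockSpectrum_div :
    ∑ t ∈ Ioc 0 m, blockSpectrum c L σ m t / (t * (t + 1)) =
      ∑ j ∈ Icc 1 m, L (σ j) / (((m - j + 1) * (m - j + 2) : ℕ) : ℝ) := by
  rw [← Icc_add_one_left_eq_Ioc, zero_add, ← sum_Icc_reflect]
  refine sum_congr rfl fun j hj => ?_
  obtain ⟨hj₁, hj₂⟩ := mem_Icc.1 hj
  rw [blockSpectrum_of_ne_zero _ _ _ _ (by omega), show m + 1 - (m + 1 - j) = j by omega,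
    show m + 1 - j = m - j + 1 by omega]
  push_cast
  ring

lemma prod_blockSpectrum :
    ∏ t : Fin (m + 1), (X - C (blockSpectrum c L σ m t)) =
      (X - C c) * ∏ j ∈ Icc 1 m, (X - C (L (σ j))) := by
  rw [Fin.prod_univ_succ, Fin.val_zero, blockSpectrum_zero]
  simp only [Fin.val_succ]
  rw [prod_fin_succ_eq_prod_Ioc m fun t => X - C (blockSpectrum c L σ m t),
    ← Icc_add_one_left_eq_Ioc, zero_add, ← prod_Icc_reflect]
  refine congrArg _ (prod_congr rfl fun j hj => ?_)
  obtain ⟨hj₁, hj₂⟩ := mem_Icc.1 hj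
  rw [blockSpectrum_of_ne_zero _ _ _ _ (by omega), show m + 1 - (m + 1 - j) = j by omega]

end

end Soules

open Soules in
theorem sdiep_4k2_general (k n m : ℕ) (hn : n = 4 * k + 2) (hm : m = 2 * k)
    (L : ℕ → ℝ) (hub : L 2 ≤ 1)
    (hdec : ∀ j, 2 ≤ j → j < n → L (j + 1) ≤ L j)
    (hcond1 : 0 ≤ 1 / (n : ℝ) + ((n : ℝ) - (m : ℝ) - 1) / ((n : ℝ) * ((m : ℝ) + 1)) * L 2 +
        ∑ j ∈ Finset.Icc 1 m,
          L (if j = 1 then 3 else if Odd j then 2 * j + 1 else 2 * j + 2) /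
            (((m - j + 1) * (m - j + 2) : ℕ) : ℝ))
    (hcond2 : 0 ≤ 1 / (n : ℝ) + ((n : ℝ) - (m : ℝ) - 1) / ((n : ℝ) * ((m : ℝ) + 1)) * L 2 +
        ∑ j ∈ Finset.Icc 1 m, L (if Odd j then 2 * j + 2 else 2 * j + 1) /
          (((m - j + 1) * (m - j + 2) : ℕ) : ℝ)) :
    ∃ D : Matrix (Fin n) (Fin n) ℝ, D.IsSymm ∧ DoublyStochastic D ∧
      D.charpoly = (X - C 1) * ∏ j ∈ Finset.Icc 2 n, (X - C (L j)) := by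
  obtain rfl : n = 2 * m + 2 := by omega
  have hL : AntitoneOn L (Set.Icc 2 (2 * m + 2)) :=
    antitoneOn_of_add_one_le Set.ordConnected_Icc fun j _ hj hj₁ => hdec j hj.1 (by
      simp only [Set.mem_Icc] at hj₁; omega)
  have hweight : 1 / ((2 * m + 2 : ℕ) : ℝ) +
      (((2 * m + 2 : ℕ) : ℝ) - m - 1) / (((2 * m + 2 : ℕ) : ℝ) * (m + 1)) * L 2 =
      (1 + L 2) / 2 / (m + 1) := by
    push_cast; field_simp; ring
  have hL2 : L 2 ≤ (1 + L 2) / 2 := by linarith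
  have hsymm := soulesBlock_isSymm m (blockSpectrum 1 L alphaIdx m)
    (blockSpectrum (L 2) L betaIdx m)
  have hnonneg := soulesBlock_nonneg hub
    (blockSpectrum_monotoneOn hL (alphaIdx_monotoneOn.mono fun j hj => hj.1) (alphaIdx_mapsTo m))
    (blockSpectrum_monotoneOn hL (betaIdx_monotone.monotoneOn _) (betaIdx_mapsTo m))
    (fun t ht => (blockSpectrum_le hL (alphaIdx_mapsTo m) t ht).trans hL2)
    (fun t ht => (blockSpectrum_le hL (betaIdx_mapsTo m) t ht).trans hL2)
    (by rw [sum_blockSpectrum_div]; exact hweight ▸ hcond1)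
    (by rw [sum_blockSpectrum_div]; exact hweight ▸ hcond2)
  let e : Fin (m + 1) ⊕ Fin (m + 1) ≃ Fin (2 * m + 2) := finSumFinEquiv.trans (finCongr (by omega))
  refine ⟨reindex e e _, hsymm.submatrix _,
    doublyStochastic_reindex e hsymm hnonneg (sum_soulesBlock_apply m _ _), ?_⟩
  rw [charpoly_reindex, soulesBlock_charpoly, prod_blockSpectrum, prod_blockSpectrum,
    Finset.Icc_eq_cons_Ioc (show 2 ≤ 2 * m + 2 by omega), Finset.prod_cons,
    ← prod_alphaIdx_mul_prod_betaIdx]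
  ring

/-- Case `n = 4k+2`, `m = 2k`: with `α₁ = 3` and `α_j = 2j+1` for odd `j > 1`, `2j+2` for
even `j` (the increasing enumeration `3, 6, 7, 10, 11, …, n-4, n-3, n`), and `β_j = 2j+2`
for `j` odd, `2j+1` for `j` even (the increasing enumeration `4, 5, 8, 9, …, n-2, n-1`),
if both `1/n + ((n-m-1)/(n(m+1)))λ₂ + ∑_{j=1}^{m} λ_{α_j}/((m-j+1)(m-j+2)) ≥ 0` and
`1/n + ((n-m-1)/(n(m+1)))λ₂ + ∑_{j=1}^{m} λ_{β_j}/((m-j+1)(m-j+2)) ≥ 0`, then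
`1, λ₂, …, λₙ` is the spectrum of an `n × n` symmetric doubly stochastic matrix. -/
theorem sdiep_4k2 (k n m : ℕ) (hk : 1 ≤ k) (hn : n = 4 * k + 2) (hm : m = 2 * k)
    (L : ℕ → ℝ) (hub : L 2 ≤ 1)
    (hdec : ∀ j, 2 ≤ j → j < n → L (j + 1) ≤ L j)
    (hlb : -1 ≤ L n)
    (htr : 0 ≤ 1 + ∑ j ∈ Finset.Icc 2 n, L j)
    (hcond1 : 0 ≤ 1 / (n : ℝ) + ((n : ℝ) - (m : ℝ) - 1) / ((n : ℝ) * ((m : ℝ) + 1)) * L 2 +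
        ∑ j ∈ Finset.Icc 1 m,
          L (if j = 1 then 3 else if Odd j then 2 * j + 1 else 2 * j + 2) /
            (((m - j + 1) * (m - j + 2) : ℕ) : ℝ))
    (hcond2 : 0 ≤ 1 / (n : ℝ) + ((n : ℝ) - (m : ℝ) - 1) / ((n : ℝ) * ((m : ℝ) + 1)) * L 2 +
        ∑ j ∈ Finset.Icc 1 m, L (if Odd j then 2 * j + 2 else 2 * j + 1) /
          (((m - j + 1) * (m - j + 2) : ℕ) : ℝ)) :
    ∃ D : Matrix (Fin n) (Fin n) ℝ, D.IsSymm ∧ DoublyStochastic D ∧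
      D.charpoly = (X - C 1) * ∏ j ∈ Finset.Icc 2 n, (X - C (L j)) :=
  sdiep_4k2_general k n m hn hm L hub hdec hcond1 hcond2
end

section
/- Let k ≥ 1, n = 4k+4, m = 2k+1, and let 1 ≥ λ₂ ≥ ... ≥ λₙ ≥ −1 be real numbers with 1 + λ₂ + ... + λₙ ≥ 0. Let α₁ < α₂ < ... < α_m be the increasing enumeration of {3} ∪ {j : 6 ≤ j ≤ n−1, j ≡ 2 or 3 (mod 4)} (namely 3, 6, 7, 10, 11, ..., n−2, n−1), and let β₁ < ... < β_m be the increasing enumeration of {j : 4 ≤ j ≤ n−3, j ≡ 0 or 1 (mod 4)} ∪ {n} (namely 4, 5, 8, 9, ..., n−4, n−3, n). If both 1/n + ((n−m−1)/(n(m+1)))·λ₂ + Σ_{j=1}^{m} λ_{α_j}/((m−j+1)(m−j+2)) ≥ 0 and 1/n + ((n−m−1)/(n(m+1)))·λ₂ + Σ_{j=1}^{m} λ_{β_j}/((m−j+1)(m−j+2)) ≥ 0 hold, then there exists an n×n symmetric doubly stochastic matrix whose eigenvalues, counted with algebraic multiplicity, are 1, λ₂, ..., λₙ. -/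
/-!
Write `n = 2 (m + 1)` and index `ℝⁿ` by `Fin 2 × Fin (m + 1)`. With the Helmert vectors
`v_q = (1, …, 1, -q, 0, …, 0)` (`q` ones), the vectors `𝟙`, `(𝟙, -𝟙)` and `e_h ⊗ v_q`
(`h ∈ {0, 1}`, `1 ≤ q ≤ m`) form an orthogonal basis, and the symmetric matrix having them as
eigenvectors with eigenvalues `1`, `λ₂`, and `λ_{α_{m+1-q}}` resp. `λ_{β_{m+1-q}}` on `e_0 ⊗ v_q`
resp. `e_1 ⊗ v_q`, has row sums `1` and the prescribed spectrum. Its entries outside the two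
diagonal blocks equal `(1 - λ₂)/n`. Inside a block the entry at `(a, b)`, `a < b`, is
`(1 + λ₂)/n + ∑_{q > b} w_q/(q(q+1)) - w_b/(b+1)` and the one at `(a, a)` is
`(1 + λ₂)/n + ∑_{q > a} w_q/(q(q+1)) + a w_a/(a+1)`, where the weights `w_q` increase with `q`
because the `λ_j` decrease: the first is therefore at least `(1 + λ₂ - 2 w_b)/n ≥ 0` (as
`w_b ≤ λ₂ ≤ 1`), the second at least the quantity assumed nonnegative.
-/

open Matrix Polynomial

open Finset

section SpectralSum

variable {ι : Type*} [Fintype ι]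

noncomputable def spectralSum (u : ι → ι → ℝ) (c : ι → ℝ) : Matrix ι ι ℝ :=
  of fun i j => ∑ t, c t * u t i * u t j / (u t ⬝ᵥ u t)

variable {u : ι → ι → ℝ}

theorem spectralSum_isSymm (c : ι → ℝ) : (spectralSum u c).IsSymm :=
  ext fun i j => by simp only [spectralSum, transpose_apply, of_apply, mul_right_comm]

theorem spectralSum_mulVec (horth : Pairwise fun s t => u s ⬝ᵥ u t = 0)
    (hne : ∀ t, u t ⬝ᵥ u t ≠ 0) (c : ι → ℝ) (s : ι) :
    spectralSum u c *ᵥ u s = c s • u s := by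
  classical
  ext i
  have hdot (t : ι) : ∑ j, c t * u t i * u t j / (u t ⬝ᵥ u t) * u s j
      = c t * u t i * (u t ⬝ᵥ u s) / (u t ⬝ᵥ u t) := by
    simp only [dotProduct, Finset.mul_sum, Finset.sum_div]
    exact Finset.sum_congr rfl fun j _ => by ring
  rw [mulVec, dotProduct]
  simp only [spectralSum, of_apply, Finset.sum_mul]
  rw [Finset.sum_comm, Finset.sum_congr rfl fun t _ => hdot t, Finset.sum_eq_single s]
  · rw [Pi.smul_apply, smul_eq_mul, mul_div_assoc, div_self (hne s), mul_one]
  · intro t _ hts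
    rw [horth hts, mul_zero, zero_div]
  · simp

theorem charpoly_spectralSum [DecidableEq ι] (horth : Pairwise fun s t => u s ⬝ᵥ u t = 0)
    (hne : ∀ t, u t ⬝ᵥ u t ≠ 0) (c : ι → ℝ) :
    (spectralSum u c).charpoly = ∏ t, (X - C (c t)) := by
  let P : Matrix ι ι ℝ := of fun i t => u t i
  let R : Matrix ι ι ℝ := of fun t j => u t j / (u t ⬝ᵥ u t)
  have hRP : R * P = 1 := by
    ext s t
    have : ∑ i, u s i / (u s ⬝ᵥ u s) * u t i = (u s ⬝ᵥ u t) / (u s ⬝ᵥ u s) := by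
      simp only [dotProduct, Finset.sum_div]
      exact Finset.sum_congr rfl fun i _ => by ring
    simp only [R, P, mul_apply, of_apply, one_apply, this]
    by_cases hst : s = t
    · subst hst; simp [hne s]
    · simp [hst, horth hst]
  have hD : spectralSum u c = P * (diagonal c * R) := by
    ext i j
    simp only [spectralSum, P, R, of_apply, mul_apply, diagonal_apply, ite_mul, zero_mul,
      Finset.sum_ite_eq, Finset.mem_univ, if_true]
    exact Finset.sum_congr rfl fun t _ => by ring
  rw [hD, charpoly_mul_comm, mul_assoc, hRP, mul_one, charpoly_diagonal]

end SpectralSum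

section Helmert

noncomputable def helmert (q a : ℕ) : ℝ := if q = 0 ∨ a < q then 1 else if a = q then -q else 0

variable {p q q' a b m : ℕ}

theorem helmert_zero_left (a : ℕ) : helmert 0 a = 1 := if_pos (Or.inl rfl)

theorem helmert_of_lt (h : a < q) : helmert q a = 1 := if_pos (Or.inr h)

theorem helmert_self (hq : q ≠ 0) : helmert q q = -q := by simp [helmert, hq]

theorem helmert_of_gt (hq : q ≠ 0) (h : q < a) : helmert q a = 0 := by
  simp [helmert, hq, h.not_gt, h.ne']

theorem sum_range_helmert_comp (hq : q ≠ 0) (hqp : q < p) (f : ℝ → ℝ) (hf : f 0 = 0) :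
    ∑ a ∈ range p, f (helmert q a) = q * f 1 + f (-q) := by
  obtain ⟨r, rfl⟩ : ∃ r, p = q + 1 + r := ⟨p - (q + 1), by omega⟩
  have hbelow : ∑ a ∈ range q, f (helmert q a) = q * f 1 := by
    rw [sum_congr rfl fun a ha => by rw [helmert_of_lt (mem_range.mp ha)], sum_const,
      card_range, nsmul_eq_mul]
  have habove : ∑ x ∈ range r, f (helmert q (q + 1 + x)) = 0 :=
    sum_eq_zero fun x _ => by rw [helmert_of_gt hq (by omega), hf]
  rw [sum_range_add, sum_range_succ, hbelow, helmert_self hq, habove, add_zero]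

theorem sum_range_helmert_mul_helmert (hqq' : q < q') (hq'p : q' < p) :
    ∑ a ∈ range p, helmert q a * helmert q' a = 0 := by
  have hq' : q' ≠ 0 := by omega
  by_cases hq : q = 0
  · simp only [hq, helmert_zero_left, one_mul]
    simpa using sum_range_helmert_comp hq' hq'p id rfl
  · have hprod (a : ℕ) : helmert q a * helmert q' a = helmert q a := by
      rcases le_or_gt a q with haq | haq
      · rw [helmert_of_lt (by omega : a < q'), mul_one]
      · rw [helmert_of_gt hq haq, zero_mul]
    simp only [hprod]
    simpa using sum_range_helmert_comp hq (by omega : q < p) id rfl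

theorem sum_range_helmert_mul_self (hqp : q < p) :
    ∑ a ∈ range p, helmert q a * helmert q a = if q = 0 then (p : ℝ) else q * (q + 1) := by
  by_cases hq : q = 0
  · simp [hq, helmert_zero_left]
  · rw [if_neg hq]
    have := sum_range_helmert_comp hq hqp (fun x => x * x) (by simp)
    rw [this]
    ring

theorem sum_Ioc_one_div_mul_succ (h : b ≤ m) :
    ∑ q ∈ Ioc b m, 1 / ((q : ℝ) * (q + 1)) = 1 / (b + 1) - 1 / (m + 1) := by
  induction m, h using Nat.le_induction with
  | base => simp
  | succ m hbm ih =>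
    rw [sum_Ioc_succ_top hbm, ih]
    push_cast
    field_simp
    ring

theorem helmert_mul_helmert_of_lt (hab : a ≤ b) (hbq : b < q) :
    helmert q a * helmert q b = 1 := by
  rw [helmert_of_lt (by omega), helmert_of_lt hbq, mul_one]

theorem sum_Ioc_helmert_mul_helmert (w : ℕ → ℝ) (hab : a ≤ b) (hb : b ≠ 0) :
    ∑ q ∈ Ioc 0 b, w q * (helmert q a * helmert q b) / (q * (q + 1))
      = -(w b * helmert b a) / (b + 1) := by
  obtain ⟨c, rfl⟩ : ∃ c, b = c + 1 := ⟨b - 1, by omega⟩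
  rw [sum_Ioc_succ_top (Nat.zero_le c), helmert_self hb,
    sum_eq_zero fun q hq => by
      rw [mem_Ioc] at hq
      rw [helmert_of_gt (a := c + 1) (by omega) (by omega), mul_zero, mul_zero, zero_div]]
  push_cast
  field_simp
  ring

theorem add_sum_helmert_mul_helmert_nonneg {l : ℝ} {w : ℕ → ℝ} (hl : l ≤ 1)
    (hmono : MonotoneOn w (Set.Icc 1 m)) (hwl : ∀ q ∈ Set.Icc 1 m, w q ≤ l)
    (hw : 0 ≤ (1 + l) / (2 * (m + 1)) + ∑ q ∈ Ioc 0 m, w q / (q * (q + 1)))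
    (ha : a ≤ m) (hb : b ≤ m) :
    0 ≤ (1 + l) / (2 * (m + 1)) +
      ∑ q ∈ Ioc 0 m, w q * (helmert q a * helmert q b) / (q * (q + 1)) := by
  wlog hab : a ≤ b generalizing a b
  · simpa only [mul_comm (helmert _ a)] using this hb ha (by omega)
  have hwle {q q' : ℕ} (hq : 0 < q) (hqq' : q ≤ q') (hq'm : q' ≤ m) : w q ≤ w q' :=
    hmono ⟨hq, by omega⟩ ⟨by omega, hq'm⟩ hqq'
  have htail : ∑ q ∈ Ioc b m, w q * (helmert q a * helmert q b) / (q * (q + 1))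
      = ∑ q ∈ Ioc b m, w q / (q * (q + 1)) :=
    sum_congr rfl fun q hq => by
      rw [helmert_mul_helmert_of_lt hab (mem_Ioc.mp hq).1, mul_one]
  rw [← sum_Ioc_consecutive _ (Nat.zero_le b) hb, htail]
  rw [← sum_Ioc_consecutive _ (Nat.zero_le b) hb] at hw
  rcases Nat.eq_zero_or_pos b with rfl | hb0
  · simpa using hw
  rw [sum_Ioc_helmert_mul_helmert w hab hb0.ne']
  rcases hab.lt_or_eq with hab | rfl
  · -- the tail weights are at least `w b`, and `2 w b ≤ 2 l ≤ 1 + l`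
    have hlower : w b * ∑ q ∈ Ioc b m, 1 / ((q : ℝ) * (q + 1))
        ≤ ∑ q ∈ Ioc b m, w q / (q * (q + 1)) := by
      rw [mul_sum]
      exact sum_le_sum fun q hq => by
        rw [mul_one_div]
        gcongr
        exact hwle hb0 (mem_Ioc.mp hq).1.le (mem_Ioc.mp hq).2
    rw [sum_Ioc_one_div_mul_succ hb] at hlower
    have hwb : w b ≤ l := hwl b ⟨hb0, hb⟩
    have hm : (0 : ℝ) < m + 1 := by positivity
    have : w b / (m + 1) ≤ (1 + l) / (2 * (m + 1)) := by
      rw [div_le_div_iff₀ hm (by positivity)]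
      nlinarith
    rw [helmert_of_lt hab, mul_one, neg_div]
    have : w b * (1 / (b + 1) - 1 / (m + 1)) = w b / (b + 1) - w b / (m + 1) := by ring
    linarith
  · -- the head weights are at most `w a`, so the head sum is at most the diagonal term
    have hupper : ∑ q ∈ Ioc 0 a, w q / (q * (q + 1))
        ≤ w a * ∑ q ∈ Ioc 0 a, 1 / ((q : ℝ) * (q + 1)) := by
      rw [mul_sum]
      exact sum_le_sum fun q hq => by
        rw [mul_one_div]
        gcongr
        exact hwle (mem_Ioc.mp hq).1 (mem_Ioc.mp hq).2 ha
    rw [sum_Ioc_one_div_mul_succ (Nat.zero_le a)] at hupper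
    rw [helmert_self hb0.ne']
    have : w a * (1 / ((0 : ℕ) + 1) - 1 / (a + 1)) = -(w a * -a) / (a + 1) := by
      push_cast
      field_simp
      ring
    linarith

end Helmert

@[to_additive]
theorem prod_Ioc_zero_eq_prod_fin {M : Type*} [CommMonoid M] (f : ℕ → M) :
    ∀ m : ℕ, ∏ q ∈ Ioc 0 m, f q = ∏ r : Fin m, f (r + 1)
  | 0 => by simp
  | m + 1 => by
    rw [prod_Ioc_succ_top (Nat.zero_le m), prod_Ioc_zero_eq_prod_fin f m, Fin.prod_univ_castSucc]
    simp

theorem dotProduct_mul_mul {α β : Type*} [Fintype α] [Fintype β] (x x' : α → ℝ) (y y' : β → ℝ) :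
    ((fun i : α × β => x i.1 * y i.2) ⬝ᵥ fun i => x' i.1 * y' i.2) = (x ⬝ᵥ x') * (y ⬝ᵥ y') := by
  simp only [dotProduct, Fintype.sum_prod_type, sum_mul_sum]
  exact sum_congr rfl fun _ _ => sum_congr rfl fun _ _ => by ring

section Construction

variable {m : ℕ}

/-- At level `q = 0` the basis `(1, 1), (1, -1)` of `ℝ²`, at every other level the standard
basis; tensored with the Helmert vectors it gives an orthogonal basis of `ℝ² ⊗ ℝ^(m+1)` whose
first vector is constant. -/
noncomputable def levelBasis (q : ℕ) (h h' : Fin 2) : ℝ :=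
  if q = 0 then (if h = 1 ∧ h' = 1 then -1 else 1) else if h = h' then 1 else 0

noncomputable def helmertBasis (m : ℕ) (t : Fin 2 × Fin (m + 1)) : Fin 2 × Fin (m + 1) → ℝ :=
  fun i => levelBasis t.2 t.1 i.1 * helmert t.2 i.2

theorem levelBasis_dotProduct (q : ℕ) (h h' : Fin 2) :
    levelBasis q h ⬝ᵥ levelBasis q h' = if h = h' then (if q = 0 then 2 else 1) else 0 := by
  by_cases hq : q = 0 <;> fin_cases h <;> fin_cases h' <;>
    norm_num [levelBasis, dotProduct, Fin.sum_univ_two, hq]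

theorem helmert_dotProduct (q q' : Fin (m + 1)) :
    ((fun a : Fin (m + 1) => helmert q a) ⬝ᵥ fun a => helmert q' a)
      = if q = q' then (if (q : ℕ) = 0 then (m + 1 : ℝ) else q * (q + 1)) else 0 := by
  rw [dotProduct, Fin.sum_univ_eq_sum_range (fun a => helmert q a * helmert q' a)]
  by_cases hqq' : q = q'
  · subst hqq'
    rw [sum_range_helmert_mul_self q.isLt, if_pos rfl]
    push_cast
    rfl
  · rw [if_neg hqq']
    rcases Fin.lt_or_lt_of_ne hqq' with hlt | hlt
    · exact sum_range_helmert_mul_helmert hlt q'.isLt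
    · simp only [mul_comm (helmert q _)]
      exact sum_range_helmert_mul_helmert hlt q.isLt

theorem helmertBasis_dotProduct (s t : Fin 2 × Fin (m + 1)) :
    helmertBasis m s ⬝ᵥ helmertBasis m t = if s = t then
      (if (t.2 : ℕ) = 0 then 2 * (m + 1 : ℝ) else t.2 * (t.2 + 1)) else 0 := by
  refine (dotProduct_mul_mul (levelBasis s.2 s.1) (levelBasis t.2 t.1)
    (fun a : Fin (m + 1) => helmert s.2 a) (fun a => helmert t.2 a)).trans ?_
  rw [helmert_dotProduct]
  obtain ⟨h, q⟩ := s
  obtain ⟨h', q'⟩ := t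
  by_cases hqq' : q = q'
  · subst hqq'
    rw [levelBasis_dotProduct]
    by_cases hh : h = h' <;> by_cases hq : (q : ℕ) = 0 <;> simp [hh, hq]
  · simp [hqq']

theorem helmertBasis_pairwise_orthogonal :
    Pairwise fun s t => helmertBasis m s ⬝ᵥ helmertBasis m t = 0 :=
  fun s t hst => by simp only [helmertBasis_dotProduct, if_neg hst]

theorem helmertBasis_dotProduct_self_ne_zero (t : Fin 2 × Fin (m + 1)) :
    helmertBasis m t ⬝ᵥ helmertBasis m t ≠ 0 := by
  rw [helmertBasis_dotProduct, if_pos rfl]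
  split_ifs with hq
  · positivity
  · have : (0 : ℝ) < t.2 := by exact_mod_cast Nat.pos_of_ne_zero hq
    positivity

theorem helmertBasis_zero : helmertBasis m (0, 0) = 1 := by
  ext i
  simp [helmertBasis, levelBasis, helmert_zero_left]

noncomputable def helmertMatrix (m : ℕ) (l : ℝ) (w : Fin 2 → ℕ → ℝ) :
    Matrix (Fin 2 × Fin (m + 1)) (Fin 2 × Fin (m + 1)) ℝ :=
  spectralSum (helmertBasis m) fun t =>
    if (t.2 : ℕ) = 0 then (if t.1 = 0 then 1 else l) else w t.1 t.2

theorem helmertMatrix_apply (l : ℝ) (w : Fin 2 → ℕ → ℝ) (h h' : Fin 2) (a b : Fin (m + 1)) :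
    helmertMatrix m l w (h, a) (h', b) =
      (1 + levelBasis 0 1 h * levelBasis 0 1 h' * l) / (2 * (m + 1)) +
        if h = h' then ∑ q ∈ Ioc 0 m, w h q * (helmert q a * helmert q b) / (q * (q + 1))
        else 0 := by
  rw [sum_Ioc_zero_eq_sum_fin]
  simp only [helmertMatrix, spectralSum, of_apply, helmertBasis_dotProduct, if_true,
    Fintype.sum_prod_type_right, Fin.sum_univ_succ (n := m), helmertBasis, Fin.val_zero,
    Fin.val_succ, helmert_zero_left, Nat.add_one_ne_zero, if_false]
  fin_cases h <;> fin_cases h' <;> simp [levelBasis, Fin.sum_univ_two] <;> field_simp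

theorem helmertMatrix_nonneg {l : ℝ} {w : Fin 2 → ℕ → ℝ} (hl : l ≤ 1)
    (hmono : ∀ h, MonotoneOn (w h) (Set.Icc 1 m)) (hwl : ∀ h, ∀ q ∈ Set.Icc 1 m, w h q ≤ l)
    (hw : ∀ h, 0 ≤ (1 + l) / (2 * (m + 1)) + ∑ q ∈ Ioc 0 m, w h q / (q * (q + 1)))
    (i j : Fin 2 × Fin (m + 1)) : 0 ≤ helmertMatrix m l w i j := by
  obtain ⟨h, a⟩ := i
  obtain ⟨h', b⟩ := j
  rw [helmertMatrix_apply]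
  by_cases hh : h = h'
  · subst hh
    have hsign : levelBasis 0 1 h * levelBasis 0 1 h = 1 := by
      fin_cases h <;> norm_num [levelBasis]
    rw [if_pos rfl, hsign, one_mul]
    exact add_sum_helmert_mul_helmert_nonneg hl (hmono h) (hwl h) (hw h)
      a.is_le b.is_le
  · have hsign : levelBasis 0 1 h * levelBasis 0 1 h' = -1 := by
      revert hh
      fin_cases h <;> fin_cases h' <;> norm_num [levelBasis]
    rw [if_neg hh, add_zero, hsign]
    exact div_nonneg (by linarith) (by positivity)

theorem helmertMatrix_mulVec_one (l : ℝ) (w : Fin 2 → ℕ → ℝ) : helmertMatrix m l w *ᵥ 1 = 1 := by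
  have := spectralSum_mulVec (helmertBasis_pairwise_orthogonal (m := m))
    helmertBasis_dotProduct_self_ne_zero
    (fun t => if (t.2 : ℕ) = 0 then (if t.1 = 0 then 1 else l) else w t.1 t.2) (0, 0)
  simpa [helmertMatrix, helmertBasis_zero] using this

theorem charpoly_helmertMatrix (l : ℝ) (w : Fin 2 → ℕ → ℝ) :
    (helmertMatrix m l w).charpoly =
      (X - C 1) * (X - C l) * ∏ q ∈ Ioc 0 m, (X - C (w 0 q)) * (X - C (w 1 q)) := by
  rw [helmertMatrix, charpoly_spectralSum helmertBasis_pairwise_orthogonal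
    helmertBasis_dotProduct_self_ne_zero, Fintype.prod_prod_type_right, Fin.prod_univ_succ,
    prod_Ioc_zero_eq_prod_fin]
  simp [Fin.prod_univ_two]

theorem helmertMatrix_isSymm (l : ℝ) (w : Fin 2 → ℕ → ℝ) : (helmertMatrix m l w).IsSymm :=
  spectralSum_isSymm _

theorem exists_isSymm_mem_doublyStochastic_charpoly_eq {l : ℝ} {w : Fin 2 → ℕ → ℝ} (hl : l ≤ 1)
    (hmono : ∀ h, MonotoneOn (w h) (Set.Icc 1 m)) (hwl : ∀ h, ∀ q ∈ Set.Icc 1 m, w h q ≤ l)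
    (hw : ∀ h, 0 ≤ (1 + l) / (2 * (m + 1)) + ∑ q ∈ Ioc 0 m, w h q / (q * (q + 1))) :
    ∃ D : Matrix (Fin (2 * (m + 1))) (Fin (2 * (m + 1))) ℝ,
      D.IsSymm ∧ D ∈ doublyStochastic ℝ (Fin (2 * (m + 1))) ∧
        D.charpoly = (X - C 1) * (X - C l) * ∏ q ∈ Ioc 0 m, (X - C (w 0 q)) * (X - C (w 1 q)) := by
  refine ⟨reindex finProdFinEquiv finProdFinEquiv (helmertMatrix m l w),
    (helmertMatrix_isSymm l w).submatrix _, reindex_mem_doublyStochastic ?_, ?_⟩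
  · refine ⟨helmertMatrix_nonneg hl hmono hwl hw, helmertMatrix_mulVec_one l w, ?_⟩
    rw [← (helmertMatrix_isSymm l w).eq, vecMul_transpose, helmertMatrix_mulVec_one]
  · rw [charpoly_reindex, charpoly_helmertMatrix]

end Construction

@[to_additive]
theorem prod_Ioc_reflect {M : Type*} [CommMonoid M] (f : ℕ → M) (m : ℕ) :
    ∏ q ∈ Ioc 0 m, f (m + 1 - q) = ∏ q ∈ Ioc 0 m, f q :=
  prod_nbij' (fun q => m + 1 - q) (fun q => m + 1 - q) (fun q hq => by simp at hq ⊢; omega)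
    (fun q hq => by simp at hq ⊢; omega) (fun q hq => by simp at hq; omega)
    (fun q hq => by simp at hq; omega) fun _ _ => rfl

theorem prod_Icc_two_eq_mul_prod_Ioc {M : Type*} [CommMonoid M] (f : ℕ → M) :
    ∀ m : ℕ, ∏ t ∈ Icc 2 (2 * m + 2), f t = f 2 * ∏ j ∈ Ioc 0 m, f (2 * j + 1) * f (2 * j + 2)
  | 0 => by simp
  | m + 1 => by
    rw [show 2 * (m + 1) + 2 = 2 * m + 2 + 1 + 1 by ring, prod_Icc_succ_top (by omega),
      prod_Icc_succ_top (by omega), prod_Icc_two_eq_mul_prod_Ioc f m,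
      prod_Ioc_succ_top (Nat.zero_le m)]
    simp only [mul_assoc]
    rfl

theorem sum_Icc_div_eq_sum_Ioc_reflect (g : ℕ → ℝ) (m : ℕ) :
    ∑ j ∈ Icc 1 m, g j / (((m - j + 1) * (m - j + 2) : ℕ) : ℝ)
      = ∑ q ∈ Ioc 0 m, g (m + 1 - q) / (q * (q + 1)) := by
  rw [← sum_Ioc_reflect]
  refine sum_congr rfl fun q hq => ?_
  rw [mem_Ioc] at hq
  rw [show m + 1 - (m + 1 - q) = q by omega, show m + 1 - q = m - q + 1 by omega]
  push_cast
  ring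

theorem monotoneOn_comp_reflect {m : ℕ} {L : ℕ → ℝ} (hL : AntitoneOn L (Set.Icc 2 (2 * m + 2)))
    {σ : ℕ → ℕ} (hσ : ∀ j, σ j ∈ Set.Icc (2 * j + 1) (2 * j + 2)) :
    MonotoneOn (fun q => L (σ (m + 1 - q))) (Set.Icc 1 m) := by
  intro q hq q' hq' hqq'
  have h := hσ (m + 1 - q)
  have h' := hσ (m + 1 - q')
  simp only [Set.mem_Icc] at hq hq' h h'
  rcases hqq'.lt_or_eq with hlt | rfl
  · exact hL ⟨by omega, by omega⟩ ⟨by omega, by omega⟩ (by omega)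
  · rfl

theorem exists_isSymm_mem_doublyStochastic_of_pairing (m : ℕ) (L : ℕ → ℝ) (α β : ℕ → ℕ)
    (hαβ : ∀ j, α j = 2 * j + 1 ∧ β j = 2 * j + 2 ∨ α j = 2 * j + 2 ∧ β j = 2 * j + 1)
    (hub : L 2 ≤ 1) (hL : AntitoneOn L (Set.Icc 2 (2 * m + 2)))
    (hα : 0 ≤ (1 + L 2) / (2 * (m + 1)) +
      ∑ j ∈ Icc 1 m, L (α j) / (((m - j + 1) * (m - j + 2) : ℕ) : ℝ))
    (hβ : 0 ≤ (1 + L 2) / (2 * (m + 1)) +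
      ∑ j ∈ Icc 1 m, L (β j) / (((m - j + 1) * (m - j + 2) : ℕ) : ℝ)) :
    ∃ D : Matrix (Fin (2 * (m + 1))) (Fin (2 * (m + 1))) ℝ,
      D.IsSymm ∧ D ∈ doublyStochastic ℝ (Fin (2 * (m + 1))) ∧
        D.charpoly = (X - C 1) * ∏ j ∈ Icc 2 (2 * (m + 1)), (X - C (L j)) := by
  have hσ {σ : ℕ → ℕ} (h : ∀ j, σ j = 2 * j + 1 ∨ σ j = 2 * j + 2) (j : ℕ) :
      σ j ∈ Set.Icc (2 * j + 1) (2 * j + 2) := by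
    rcases h j with h | h <;> simp [h]
  have hαI := hσ fun j => (hαβ j).imp (·.1) (·.1)
  have hβI := hσ fun j => (hαβ j).symm.imp (·.2) (·.2)
  have hle {σ : ℕ → ℕ} (hσI : ∀ j, σ j ∈ Set.Icc (2 * j + 1) (2 * j + 2)) :
      ∀ q ∈ Set.Icc 1 m, L (σ (m + 1 - q)) ≤ L 2 := fun q hq => by
    have := hσI (m + 1 - q)
    simp only [Set.mem_Icc] at hq this
    exact hL ⟨le_rfl, by omega⟩ ⟨by omega, by omega⟩ (by omega)
  obtain ⟨D, hsymm, hD, hchar⟩ := exists_isSymm_mem_doublyStochastic_charpoly_eq (l := L 2)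
    (w := ![fun q => L (α (m + 1 - q)), fun q => L (β (m + 1 - q))]) hub
    (Fin.forall_fin_two.mpr ⟨monotoneOn_comp_reflect hL hαI, monotoneOn_comp_reflect hL hβI⟩)
    (Fin.forall_fin_two.mpr ⟨hle hαI, hle hβI⟩)
    (Fin.forall_fin_two.mpr
      ⟨by simpa only [cons_val_zero, sum_Icc_div_eq_sum_Ioc_reflect] using hα,
        by simpa only [cons_val_one, cons_val_zero, sum_Icc_div_eq_sum_Ioc_reflect] using hβ⟩)
  refine ⟨D, hsymm, hD, hchar.trans ?_⟩
  have hpair (j : ℕ) : (X - C (L (α j))) * (X - C (L (β j)))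
      = (X - C (L (2 * j + 1))) * (X - C (L (2 * j + 2))) := by
    rcases hαβ j with ⟨ha, hb⟩ | ⟨ha, hb⟩ <;> rw [ha, hb]
    exact mul_comm _ _
  simp only [cons_val_zero, cons_val_one]
  rw [prod_Ioc_reflect (fun j => (X - C (L (α j))) * (X - C (L (β j)))),
    prod_congr rfl fun j _ => hpair j, show 2 * (m + 1) = 2 * m + 2 by ring,
    prod_Icc_two_eq_mul_prod_Ioc, mul_assoc]

theorem sdiep_4k4_general (k n m : ℕ) (hn : n = 4 * k + 4) (hm : m = 2 * k + 1)
    (L : ℕ → ℝ) (hub : L 2 ≤ 1)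
    (hdec : ∀ j, 2 ≤ j → j < n → L (j + 1) ≤ L j)
    (hcond1 : 0 ≤ 1 / (n : ℝ) + ((n : ℝ) - (m : ℝ) - 1) / ((n : ℝ) * ((m : ℝ) + 1)) * L 2 +
        ∑ j ∈ Finset.Icc 1 m,
          L (if j = 1 then 3 else if Odd j then 2 * j + 1 else 2 * j + 2) /
            (((m - j + 1) * (m - j + 2) : ℕ) : ℝ))
    (hcond2 : 0 ≤ 1 / (n : ℝ) + ((n : ℝ) - (m : ℝ) - 1) / ((n : ℝ) * ((m : ℝ) + 1)) * L 2 +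
        ∑ j ∈ Finset.Icc 1 m, L (if Odd j then 2 * j + 2 else 2 * j + 1) /
          (((m - j + 1) * (m - j + 2) : ℕ) : ℝ)) :
    ∃ D : Matrix (Fin n) (Fin n) ℝ, D.IsSymm ∧ DoublyStochastic D ∧
      D.charpoly = (X - C 1) * ∏ j ∈ Finset.Icc 2 n, (X - C (L j)) := by
  obtain rfl : n = 2 * (m + 1) := by omega
  have hL : AntitoneOn L (Set.Icc 2 (2 * m + 2)) :=
    antitoneOn_of_succ_le Set.ordConnected_Icc fun j _ hj hj' => by
      rw [Order.succ_eq_add_one] at hj' ⊢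
      exact hdec j hj.1 (by simp at hj'; omega)
  have hconst : 1 / ((2 * (m + 1) : ℕ) : ℝ) +
      (((2 * (m + 1) : ℕ) : ℝ) - m - 1) / (((2 * (m + 1) : ℕ) : ℝ) * (m + 1)) * L 2
      = (1 + L 2) / (2 * (m + 1)) := by
    push_cast
    field_simp
    ring
  have hα (j : ℕ) : (if j = 1 then 3 else if Odd j then 2 * j + 1 else 2 * j + 2)
      = if Odd j then 2 * j + 1 else 2 * j + 2 := by
    split_ifs <;> simp_all
  rw [hconst] at hcond1 hcond2
  simp only [hα] at hcond1
  obtain ⟨D, hsymm, hD, hchar⟩ := exists_isSymm_mem_doublyStochastic_of_pairing m L _ _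
    (fun j => by by_cases hj : Odd j <;> simp [hj]) hub hL hcond1 hcond2
  exact ⟨D, hsymm, mem_doublyStochastic_iff_sum.mp hD, hchar⟩

/-- Case `n = 4k+4`, `m = 2k+1`: with `α₁ = 3` and `α_j = 2j+1` for odd `j > 1`, `2j+2` for
even `j` (the increasing enumeration `3, 6, 7, 10, 11, …, n-2, n-1`), and `β_j = 2j+2` for
`j` odd, `2j+1` for `j` even (the increasing enumeration `4, 5, 8, 9, …, n-4, n-3, n`),
if both `1/n + ((n-m-1)/(n(m+1)))λ₂ + ∑_{j=1}^{m} λ_{α_j}/((m-j+1)(m-j+2)) ≥ 0` and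
`1/n + ((n-m-1)/(n(m+1)))λ₂ + ∑_{j=1}^{m} λ_{β_j}/((m-j+1)(m-j+2)) ≥ 0`, then
`1, λ₂, …, λₙ` is the spectrum of an `n × n` symmetric doubly stochastic matrix. -/
theorem sdiep_4k4 (k n m : ℕ) (hk : 1 ≤ k) (hn : n = 4 * k + 4) (hm : m = 2 * k + 1)
    (L : ℕ → ℝ) (hub : L 2 ≤ 1)
    (hdec : ∀ j, 2 ≤ j → j < n → L (j + 1) ≤ L j)
    (hlb : -1 ≤ L n)
    (htr : 0 ≤ 1 + ∑ j ∈ Finset.Icc 2 n, L j)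
    (hcond1 : 0 ≤ 1 / (n : ℝ) + ((n : ℝ) - (m : ℝ) - 1) / ((n : ℝ) * ((m : ℝ) + 1)) * L 2 +
        ∑ j ∈ Finset.Icc 1 m,
          L (if j = 1 then 3 else if Odd j then 2 * j + 1 else 2 * j + 2) /
            (((m - j + 1) * (m - j + 2) : ℕ) : ℝ))
    (hcond2 : 0 ≤ 1 / (n : ℝ) + ((n : ℝ) - (m : ℝ) - 1) / ((n : ℝ) * ((m : ℝ) + 1)) * L 2 +
        ∑ j ∈ Finset.Icc 1 m, L (if Odd j then 2 * j + 2 else 2 * j + 1) /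
          (((m - j + 1) * (m - j + 2) : ℕ) : ℝ)) :
    ∃ D : Matrix (Fin n) (Fin n) ℝ, D.IsSymm ∧ DoublyStochastic D ∧
      D.charpoly = (X - C 1) * ∏ j ∈ Finset.Icc 2 n, (X - C (L j)) :=
  sdiep_4k4_general k n m hn hm L hub hdec hcond1 hcond2
end

section
/- Let 1 ≥ λ₂ ≥ λ₃ ≥ λ₄ ≥ −1 be real numbers with 1 + λ₂ + λ₃ + λ₄ ≥ 0. If 1 − λ₂ − λ₃ + λ₄ ≥ 0, then there exists a symmetric 4×4 doubly stochastic matrix whose eigenvalues, counted with algebraic multiplicity, are 1, λ₂, λ₃, λ₄. -/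
/-!
The Sylvester–Hadamard matrix `H` of order 4 is symmetric with `H * H = 4 • 1` and first row and
column all ones. Hence `D = ¼ • H * diagonal ![1, λ₂, λ₃, λ₄] * H` is symmetric, similar to the
diagonal matrix, and has row sums `1`. Its entries are `¼ (1 ± λ₂ ± λ₃ ± λ₄)` with an even number
of minus signs, and the hypotheses make them nonnegative.
-/

open Matrix Polynomial

theorem Matrix.charpoly_mul_mul_of_mul_eq_one {n R : Type*} [Fintype n] [DecidableEq n]
    [CommRing R] {A B : Matrix n n R} (hBA : B * A = 1) (M : Matrix n n R) :
    (A * M * B).charpoly = M.charpoly := by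
  rw [mul_assoc, charpoly_mul_comm, mul_assoc, hBA, mul_one]

theorem Matrix.IsSymm.mul_diagonal_mul {n R : Type*} [Fintype n] [DecidableEq n]
    [CommSemiring R] {H : Matrix n n R} (hH : H.IsSymm) (d : n → R) :
    (H * diagonal d * H).IsSymm := by
  rw [IsSymm, transpose_mul, transpose_mul, hH.eq, diagonal_transpose, mul_assoc]

theorem DoublyStochastic.of_isSymm {n : ℕ} {D : Matrix (Fin n) (Fin n) ℝ} (hD : D.IsSymm)
    (hnonneg : ∀ i j, 0 ≤ D i j) (hrow : ∀ i, ∑ j, D i j = 1) : DoublyStochastic D :=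
  ⟨hnonneg, hrow, fun j => by simpa only [hD.apply] using hrow j⟩

def hadamard4 : Matrix (Fin 4) (Fin 4) ℝ :=
  !![1, 1, 1, 1; 1, -1, 1, -1; 1, 1, -1, -1; 1, -1, -1, 1]

theorem hadamard4_isSymm : hadamard4.IsSymm := by
  ext i j; fin_cases i <;> fin_cases j <;> rfl

theorem hadamard4_mul_self : hadamard4 * hadamard4 = (4 : ℝ) • 1 := by
  ext i j
  fin_cases i <;> fin_cases j <;> simp [hadamard4, mul_apply, Fin.sum_univ_four] <;> norm_num

noncomputable def hadamardRealization (l2 l3 l4 : ℝ) : Matrix (Fin 4) (Fin 4) ℝ :=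
  (4⁻¹ : ℝ) • (hadamard4 * diagonal ![1, l2, l3, l4] * hadamard4)

theorem hadamardRealization_eq (l2 l3 l4 : ℝ) :
    hadamardRealization l2 l3 l4 =
      !![(1+l2+l3+l4)/4, (1-l2+l3-l4)/4, (1+l2-l3-l4)/4, (1-l2-l3+l4)/4;
        (1-l2+l3-l4)/4, (1+l2+l3+l4)/4, (1-l2-l3+l4)/4, (1+l2-l3-l4)/4;
        (1+l2-l3-l4)/4, (1-l2-l3+l4)/4, (1+l2+l3+l4)/4, (1-l2+l3-l4)/4;
        (1-l2-l3+l4)/4, (1+l2-l3-l4)/4, (1-l2+l3-l4)/4, (1+l2+l3+l4)/4] := by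
  ext i j
  fin_cases i <;> fin_cases j <;>
    simp [hadamardRealization, hadamard4, mul_apply, vecMul, dotProduct, Fin.sum_univ_four] <;> ring

theorem hadamardRealization_isSymm (l2 l3 l4 : ℝ) : (hadamardRealization l2 l3 l4).IsSymm :=
  (hadamard4_isSymm.mul_diagonal_mul _).smul _

theorem charpoly_hadamardRealization (l2 l3 l4 : ℝ) :
    (hadamardRealization l2 l3 l4).charpoly =
      (X - C 1) * (X - C l2) * (X - C l3) * (X - C l4) := by
  have hinv : ((4⁻¹ : ℝ) • hadamard4) * hadamard4 = 1 := by
    rw [smul_mul_assoc, hadamard4_mul_self, smul_smul]; norm_num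
  rw [hadamardRealization, ← Matrix.mul_smul, charpoly_mul_mul_of_mul_eq_one hinv,
    charpoly_diagonal, Fin.prod_univ_four]
  rfl

theorem hadamardRealization_row_sum (l2 l3 l4 : ℝ) (i : Fin 4) :
    ∑ j, hadamardRealization l2 l3 l4 i j = 1 := by
  rw [hadamardRealization_eq]
  fin_cases i <;> simp [Fin.sum_univ_four] <;> ring

theorem hadamardRealization_nonneg {l2 l3 l4 : ℝ} (h2 : l2 ≤ 1) (h3 : l3 ≤ l2) (h4 : l4 ≤ l3)
    (htr : 0 ≤ 1 + l2 + l3 + l4) (hcond : 0 ≤ 1 - l2 - l3 + l4) (i j : Fin 4) :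
    0 ≤ hadamardRealization l2 l3 l4 i j := by
  rw [hadamardRealization_eq]
  fin_cases i <;> fin_cases j <;> simp <;> linarith

theorem sdiep_four_general (l2 l3 l4 : ℝ) (h2 : l2 ≤ 1) (h3 : l3 ≤ l2) (h4 : l4 ≤ l3)
    (htr : 0 ≤ 1 + l2 + l3 + l4) (hcond : 0 ≤ 1 - l2 - l3 + l4) :
    ∃ D : Matrix (Fin 4) (Fin 4) ℝ, D.IsSymm ∧ DoublyStochastic D ∧
      D.charpoly = (X - C 1) * (X - C l2) * (X - C l3) * (X - C l4) :=
  ⟨hadamardRealization l2 l3 l4, hadamardRealization_isSymm l2 l3 l4,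
    .of_isSymm (hadamardRealization_isSymm l2 l3 l4)
      (hadamardRealization_nonneg h2 h3 h4 htr hcond) (hadamardRealization_row_sum l2 l3 l4),
    charpoly_hadamardRealization l2 l3 l4⟩

/-- If `1 ≥ λ₂ ≥ λ₃ ≥ λ₄ ≥ -1`, `1 + λ₂ + λ₃ + λ₄ ≥ 0` and `1 - λ₂ - λ₃ + λ₄ ≥ 0`, then
there is a symmetric `4 × 4` doubly stochastic matrix with eigenvalues `1, λ₂, λ₃, λ₄`. -/
theorem sdiep_four (l2 l3 l4 : ℝ) (h2 : l2 ≤ 1) (h3 : l3 ≤ l2) (h4 : l4 ≤ l3)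
    (hlb : -1 ≤ l4) (htr : 0 ≤ 1 + l2 + l3 + l4) (hcond : 0 ≤ 1 - l2 - l3 + l4) :
    ∃ D : Matrix (Fin 4) (Fin 4) ℝ, D.IsSymm ∧ DoublyStochastic D ∧
      D.charpoly = (X - C 1) * (X - C l2) * (X - C l3) * (X - C l4) :=
  sdiep_four_general l2 l3 l4 h2 h3 h4 htr hcond
end

section
/- Let X be a 3×3 doubly stochastic matrix whose eigenvalues, counted with algebraic multiplicity, are the real numbers 1, λ, μ. Then −1 ≤ λ ≤ 1, −1 ≤ μ ≤ 1, λ + 3μ + 2 ≥ 0, and 3λ + μ + 2 ≥ 0. -/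
/-!
Since `trace D = 1 + λ + μ` and `det D = λ μ`, everything reduces to inequalities between the trace
and the determinant. A `3 × 3` doubly stochastic matrix is determined by its upper-left `2 × 2` block,
which ranges over a polytope, and there its trace and determinant satisfy `0 ≤ trace D ≤ 3` and
three polynomial inequalities that read, in terms of `λ` and `μ`, `0 ≤ (1 + λ)(1 + μ)`,
`0 ≤ (1 - λ)(1 - μ)` and `0 ≤ (λ + 3μ + 2)(3λ + μ + 2)`. In each of these products the two factors
have nonnegative sum by the trace bounds, so both factors are nonnegative.
-/

open Matrix Polynomial

theorem nonneg_and_nonneg_of_mul_nonneg_of_add_nonneg {α : Type*} [Ring α] [LinearOrder α]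
    [IsStrictOrderedRing α] {x y : α} (h : 0 ≤ x * y) (hxy : 0 ≤ x + y) : 0 ≤ x ∧ 0 ≤ y := by
  rcases mul_nonneg_iff.mp h with hpos | ⟨hx, hy⟩
  · exact hpos
  · exact ⟨(neg_nonneg.mpr hy).trans (neg_le_iff_add_nonneg.mpr hxy),
      (neg_nonneg.mpr hx).trans (neg_le_iff_add_nonneg'.mpr hxy)⟩

namespace Matrix

variable {R n : Type*} [CommRing R] [IsDomain R] [Fintype n] [DecidableEq n]
  {A : Matrix n n R} {s : Multiset R}

theorem trace_eq_sum_of_charpoly_eq_prod (h : A.charpoly = (s.map fun a => X - C a).prod) :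
    A.trace = s.sum := by
  rw [trace_eq_sum_roots_charpoly_of_splits (h ▸ Splits.multisetProd (by simp [Splits.X_sub_C])),
    h, roots_multiset_prod_X_sub_C]

theorem det_eq_prod_of_charpoly_eq_prod (h : A.charpoly = (s.map fun a => X - C a).prod) :
    A.det = s.prod := by
  rw [det_eq_prod_roots_charpoly_of_splits (h ▸ Splits.multisetProd (by simp [Splits.X_sub_C])),
    h, roots_multiset_prod_X_sub_C]

end Matrix

namespace DoublyStochastic

theorem trace_nonneg {n : ℕ} {D : Matrix (Fin n) (Fin n) ℝ} (hD : DoublyStochastic D) :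
    0 ≤ D.trace :=
  Finset.sum_nonneg fun i _ => hD.1 i i

theorem trace_le {n : ℕ} {D : Matrix (Fin n) (Fin n) ℝ} (hD : DoublyStochastic D) :
    D.trace ≤ n :=
  calc D.trace ≤ ∑ _i : Fin n, (1 : ℝ) := Finset.sum_le_sum fun i _ => by
        rw [← hD.2.1 i]; exact Finset.single_le_sum (fun j _ => hD.1 i j) (Finset.mem_univ i)
    _ = n := by simp

section FinThree

variable {D : Matrix (Fin 3) (Fin 3) ℝ}

theorem entries_fin_three (hD : DoublyStochastic D) :
    D 0 2 = 1 - D 0 0 - D 0 1 ∧ D 1 2 = 1 - D 1 0 - D 1 1 ∧ D 2 0 = 1 - D 0 0 - D 1 0 ∧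
      D 2 1 = 1 - D 0 1 - D 1 1 ∧ D 2 2 = D 0 0 + D 0 1 + D 1 0 + D 1 1 - 1 := by
  obtain ⟨-, hrow, hcol⟩ := hD
  have r0 := hrow 0; have r1 := hrow 1; have r2 := hrow 2
  have c0 := hcol 0; have c1 := hcol 1
  simp only [Fin.sum_univ_three] at r0 r1 r2 c0 c1
  refine ⟨?_, ?_, ?_, ?_, ?_⟩ <;> linarith

theorem block_nonneg_fin_three (hD : DoublyStochastic D) :
    0 ≤ 1 - D 0 0 - D 0 1 ∧ 0 ≤ 1 - D 1 0 - D 1 1 ∧ 0 ≤ 1 - D 0 0 - D 1 0 ∧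
      0 ≤ 1 - D 0 1 - D 1 1 ∧ 0 ≤ D 0 0 + D 0 1 + D 1 0 + D 1 1 - 1 := by
  obtain ⟨h02, h12, h20, h21, h22⟩ := hD.entries_fin_three
  exact ⟨h02 ▸ hD.1 0 2, h12 ▸ hD.1 1 2, h20 ▸ hD.1 2 0, h21 ▸ hD.1 2 1, h22 ▸ hD.1 2 2⟩

theorem trace_fin_three (hD : DoublyStochastic D) :
    D.trace = 2 * D 0 0 + 2 * D 1 1 + D 0 1 + D 1 0 - 1 := by
  rw [Matrix.trace_fin_three, hD.entries_fin_three.2.2.2.2]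
  ring

theorem det_fin_three (hD : DoublyStochastic D) :
    D.det = D 0 1 + D 1 0 - D 0 0 - D 1 1 + 3 * (D 0 0 * D 1 1 - D 0 1 * D 1 0) := by
  obtain ⟨h02, h12, h20, h21, h22⟩ := hD.entries_fin_three
  rw [Matrix.det_fin_three, h02, h12, h20, h21, h22]
  ring

theorem trace_add_det_nonneg (hD : DoublyStochastic D) : 0 ≤ D.trace + D.det := by
  obtain ⟨h02, h12, -, -, h22⟩ := hD.block_nonneg_fin_three
  have h00 := hD.1 0 0; have h01 := hD.1 0 1; have h10 := hD.1 1 0; have h11 := hD.1 1 1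
  rw [hD.trace_fin_three, hD.det_fin_three]
  nlinarith [mul_nonneg h00 h11, mul_nonneg h02 h12, mul_nonneg h01 h12, mul_nonneg h02 h10]

theorem two_sub_trace_add_det_nonneg (hD : DoublyStochastic D) : 0 ≤ 2 - D.trace + D.det := by
  obtain ⟨h02, h12, -, -, -⟩ := hD.block_nonneg_fin_three
  have hprod : D 0 1 * D 1 0 ≤ (1 - D 0 0) * (1 - D 1 1) :=
    mul_le_mul (by linarith) (by linarith) (hD.1 1 0) (by linarith [hD.1 0 1])
  rw [hD.trace_fin_three, hD.det_fin_three]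
  linarith

theorem trace_det_quadratic_nonneg (hD : DoublyStochastic D) :
    0 ≤ (3 * D.trace - 1) * (D.trace + 1) + 4 * D.det := by
  obtain ⟨-, -, -, -, h22⟩ := hD.block_nonneg_fin_three
  have h00 := hD.1 0 0; have h11 := hD.1 1 1
  rw [hD.trace_fin_three, hD.det_fin_three]
  nlinarith [sq_nonneg (D 0 1 - D 1 0), mul_nonneg h00 h11, mul_nonneg (add_nonneg h00 h11) h22]

end FinThree

end DoublyStochastic

theorem eigenvalue_bounds_of_factor_products_nonneg {lam mu : ℝ} (hlo : -1 ≤ lam + mu)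
    (hhi : lam + mu ≤ 2) (h₁ : 0 ≤ (1 + lam) * (1 + mu)) (h₂ : 0 ≤ (1 - lam) * (1 - mu))
    (h₃ : 0 ≤ (lam + 3 * mu + 2) * (3 * lam + mu + 2)) :
    -1 ≤ lam ∧ lam ≤ 1 ∧ -1 ≤ mu ∧ mu ≤ 1 ∧
      0 ≤ lam + 3 * mu + 2 ∧ 0 ≤ 3 * lam + mu + 2 := by
  obtain ⟨g₁, g₂⟩ := nonneg_and_nonneg_of_mul_nonneg_of_add_nonneg h₁ (by linarith)
  obtain ⟨g₃, g₄⟩ := nonneg_and_nonneg_of_mul_nonneg_of_add_nonneg h₂ (by linarith)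
  obtain ⟨g₅, g₆⟩ := nonneg_and_nonneg_of_mul_nonneg_of_add_nonneg h₃ (by linarith)
  exact ⟨by linarith, by linarith, by linarith, by linarith, g₅, g₆⟩

/-- If a `3 × 3` doubly stochastic matrix has real eigenvalues `1, λ, μ` (with algebraic
multiplicity), then `-1 ≤ λ ≤ 1`, `-1 ≤ μ ≤ 1`, `λ + 3μ + 2 ≥ 0` and `3λ + μ + 2 ≥ 0`. -/
theorem rdiep_three_necessary (lam mu : ℝ) (D : Matrix (Fin 3) (Fin 3) ℝ)
    (hDS : DoublyStochastic D)
    (hspec : D.charpoly = (X - C 1) * (X - C lam) * (X - C mu)) :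
    -1 ≤ lam ∧ lam ≤ 1 ∧ -1 ≤ mu ∧ mu ≤ 1 ∧
      0 ≤ lam + 3 * mu + 2 ∧ 0 ≤ 3 * lam + mu + 2 := by
  have hprod : D.charpoly = (({1, lam, mu} : Multiset ℝ).map fun a => X - C a).prod := by
    simp [hspec, mul_assoc]
  have htr : D.trace = 1 + lam + mu := by
    simpa [add_assoc] using trace_eq_sum_of_charpoly_eq_prod hprod
  have hdet : D.det = lam * mu := by simpa using det_eq_prod_of_charpoly_eq_prod hprod
  have hlo := hDS.trace_nonneg
  have hhi : D.trace ≤ 3 := by exact_mod_cast hDS.trace_le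
  have h₁ := hDS.trace_add_det_nonneg
  have h₂ := hDS.two_sub_trace_add_det_nonneg
  have h₃ := hDS.trace_det_quadratic_nonneg
  rw [htr] at hlo hhi
  rw [htr, hdet] at h₁ h₂ h₃
  refine eigenvalue_bounds_of_factor_products_nonneg (by linarith) (by linarith) ?_ ?_ ?_
  · linear_combination h₁
  · linear_combination h₂
  · linear_combination h₃
end
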